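/- arXiv:2411.05896 — 5 statements merged into one kernel-verified Lean document; each statement's English description precedes it below -/
import Mathlib

section
/- Suppose all B^{ij} and B̄^{ij} (i,j=1,…,N) are Volterra kernels in 𝒢, λ^1,…,λ^N>0, and there exists c₀'>0 with ⟨f,(𝐁+𝐁̄*)f+2Λf⟩_{L²,N} ≥ c₀'⟨f,f⟩_{L²,N} for all f∈L²([0,T],ℝ^N). Then there exists a constant c₀>0 such that for every t∈[0,T] and every f∈L²([0,T],ℝ^N): ⟨f, 2Λf + (𝐁_t+𝐁̄*_t)f⟩_{L²,N} ≥ c₀⟨f,f⟩_{L²,N}, where 𝐁_t and 𝐁̄_t are the integral operators induced by the truncated kernels B_t(s,r):=1_{{r>t}}B(s,r) and B̄_t(s,r):=1_{{r>t}}B̄(s,r). -/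
open MeasureTheory Set Filter

noncomputable section

/-- Inner product on `L²([0,T],ℝ)`. -/
def ip (T : ℝ) (f g : ℝ → ℝ) : ℝ := ∫ t in Icc (0:ℝ) T, f t * g t

/-- Integral operator induced by a kernel `G`. -/
def opK (T : ℝ) (G : ℝ → ℝ → ℝ) (f : ℝ → ℝ) : ℝ → ℝ :=
  fun t => ∫ s in Icc (0:ℝ) T, G t s * f s

/-- Integral operator induced by the adjoint kernel `G*(t,s) = G(s,t)`. -/
def opKadj (T : ℝ) (G : ℝ → ℝ → ℝ) (f : ℝ → ℝ) : ℝ → ℝ :=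
  fun t => ∫ s in Icc (0:ℝ) T, G s t * f s

/-- `G ∈ L²([0,T]²,ℝ)`. -/
def IsL2Kernel (T : ℝ) (G : ℝ → ℝ → ℝ) : Prop :=
  Measurable (Function.uncurry G) ∧
    Integrable (fun p : ℝ × ℝ => (G p.1 p.2) ^ 2)
      ((volume.restrict (Icc (0:ℝ) T)).prod (volume.restrict (Icc (0:ℝ) T)))

/-- Volterra kernel in `𝒢`: square integrable on `[0,T]²` and vanishing for `s ≥ t`. -/
def IsVolterraKernel (T : ℝ) (G : ℝ → ℝ → ℝ) : Prop :=
  IsL2Kernel T G ∧ ∀ t s : ℝ, t ≤ s → G t s = 0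

/-- Membership in `L²([0,T],ℝ)`. -/
def MemL2 (T : ℝ) (f : ℝ → ℝ) : Prop :=
  Measurable f ∧ Integrable (fun t => (f t) ^ 2) (volume.restrict (Icc (0:ℝ) T))

/-- Membership in `L²([0,T],ℝ^N)`. -/
def MemL2N (T : ℝ) {N : ℕ} (f : ℝ → Fin N → ℝ) : Prop :=
  (∀ i, Measurable fun t => f t i) ∧
    Integrable (fun t => ∑ i, (f t i) ^ 2) (volume.restrict (Icc (0:ℝ) T))

variable {Ω : Type}

/-- Square-integrability of a process on `[0,T] × Ω`. -/
def SqInt (T : ℝ) [MeasurableSpace Ω] (P : Measure Ω) (α : ℝ → Ω → ℝ) : Prop :=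
  Integrable (fun p : ℝ × Ω => (α p.1 p.2) ^ 2) ((volume.restrict (Icc (0:ℝ) T)).prod P)

/-- Admissible control: progressively measurable and square integrable on `[0,T] × Ω`. -/
def Admissible (T : ℝ) {mΩ : MeasurableSpace Ω} (F : Filtration ℝ mΩ) (P : Measure Ω)
    (α : ℝ → Ω → ℝ) : Prop :=
  ProgMeasurable F α ∧ SqInt T P α

lemma key_int (T : ℝ) (K : ℝ → ℝ → ℝ)
    (hKm : Measurable (Function.uncurry K))
    (hK2 : Integrable (fun p : ℝ × ℝ => K p.1 p.2 ^ 2)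
      ((volume.restrict (Icc (0:ℝ) T)).prod (volume.restrict (Icc (0:ℝ) T))))
    (f g : ℝ → ℝ) (hfm : Measurable f)
    (hf2 : Integrable (fun t => f t ^ 2) (volume.restrict (Icc (0:ℝ) T)))
    (hgm : Measurable g)
    (hg2 : Integrable (fun t => g t ^ 2) (volume.restrict (Icc (0:ℝ) T))) :
    Integrable (fun s => f s * ∫ r in Icc (0:ℝ) T, K s r * g r)
      (volume.restrict (Icc (0:ℝ) T)) := by
  set μ := volume.restrict (Icc (0:ℝ) T) with hμ
  have hFm : Measurable (fun p : ℝ × ℝ => f p.1 * (K p.1 p.2 * g p.2)) :=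
    (hfm.comp measurable_fst).mul (hKm.mul (hgm.comp measurable_snd))
  have hFint : Integrable (fun p : ℝ × ℝ => f p.1 * (K p.1 p.2 * g p.2)) (μ.prod μ) := by
    have hbound : Integrable (fun p : ℝ × ℝ => K p.1 p.2 ^ 2 / 2 + f p.1 ^ 2 * g p.2 ^ 2 / 2)
        (μ.prod μ) := (hK2.div_const 2).add ((hf2.mul_prod hg2).div_const 2)
    refine hbound.mono' hFm.aestronglyMeasurable (Eventually.of_forall fun p => ?_)
    simp only [Real.norm_eq_abs]
    rw [abs_le]
    constructor
    · nlinarith [sq_nonneg (K p.1 p.2 + f p.1 * g p.2), sq_nonneg (f p.1 * g p.2)]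
    · nlinarith [sq_nonneg (K p.1 p.2 - f p.1 * g p.2), sq_nonneg (f p.1 * g p.2)]
  have h2 := hFint.integral_prod_left
  refine h2.congr (Eventually.of_forall fun s => ?_)
  simp only
  rw [integral_const_mul]


/-- Coercivity of `𝐁 + 𝐁̄* + 2Λ` implies uniform coercivity of all the
truncated operators `2Λ + 𝐁_t + 𝐁̄*_t`. -/
theorem truncated_coercivity
    (T : ℝ) (hT : 0 < T) (N : ℕ)
    (B Bbar : Fin N → Fin N → ℝ → ℝ → ℝ)
    (hB : ∀ i j, IsVolterraKernel T (B i j))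
    (hBbar : ∀ i j, IsVolterraKernel T (Bbar i j))
    (lam : Fin N → ℝ) (hlam : ∀ i, 0 < lam i)
    (c₀' : ℝ) (hc₀' : 0 < c₀')
    (hcoerc : ∀ f : ℝ → Fin N → ℝ, MemL2N T f →
      c₀' * (∫ t in Icc (0:ℝ) T, ∑ i, (f t i) ^ 2) ≤
        ∫ t in Icc (0:ℝ) T, ∑ i, f t i *
          ((∑ j, opK T (B i j) (fun s => f s j) t)
            + (∑ j, opKadj T (Bbar j i) (fun s => f s j) t) + 2 * lam i * f t i)) :
    ∃ c₀ : ℝ, 0 < c₀ ∧ ∀ t₀ ∈ Icc (0:ℝ) T, ∀ f : ℝ → Fin N → ℝ, MemL2N T f →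
      c₀ * (∫ s in Icc (0:ℝ) T, ∑ i, (f s i) ^ 2) ≤
        ∫ s in Icc (0:ℝ) T, ∑ i, f s i *
          (2 * lam i * f s i
            + (∑ j, ∫ r in Icc (0:ℝ) T, (if t₀ < r then B i j s r else 0) * f r j)
            + (∑ j, ∫ r in Icc (0:ℝ) T, (if t₀ < s then Bbar j i r s else 0) * f r j)) := by
  rcases Nat.eq_zero_or_pos N with hN | hN
  · subst hN
    exact ⟨c₀', hc₀', by intro t₀ ht₀ f hf; simp⟩
  haveI : Nonempty (Fin N) := ⟨⟨0, hN⟩⟩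
  set m := Finset.univ.inf' Finset.univ_nonempty lam with hmdef
  have hm : 0 < m := by
    rw [hmdef, Finset.lt_inf'_iff]
    exact fun i _ => hlam i
  refine ⟨min c₀' (2 * m), lt_min hc₀' (by positivity), ?_⟩
  intro t₀ ht₀ f hf
  set μ := volume.restrict (Icc (0:ℝ) T) with hμ
  set g : ℝ → Fin N → ℝ := fun s i => if t₀ < s then f s i else 0 with hgdef
  have hgm : ∀ i, Measurable fun t => g t i := fun i =>
    Measurable.ite (measurableSet_lt measurable_const measurable_id) (hf.1 i) measurable_const
  have hfc2 : ∀ i, Integrable (fun t => f t i ^ 2) μ := by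
    intro i
    refine hf.2.mono' ((hf.1 i).pow_const 2).aestronglyMeasurable
      (Eventually.of_forall fun t => ?_)
    rw [Real.norm_eq_abs, abs_of_nonneg (sq_nonneg _)]
    exact Finset.single_le_sum (fun j _ => sq_nonneg (f t j)) (Finset.mem_univ i)
  have hgc2 : ∀ i, Integrable (fun t => g t i ^ 2) μ := by
    intro i
    refine (hfc2 i).mono' (((hgm i).pow_const 2)).aestronglyMeasurable
      (Eventually.of_forall fun t => ?_)
    rw [Real.norm_eq_abs, abs_of_nonneg (sq_nonneg _)]
    by_cases hs : t₀ < t <;> simp [hgdef, hs, sq_nonneg]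
  have hgL2 : MemL2N T g := by
    refine ⟨hgm, hf.2.mono' ?_ (Eventually.of_forall fun t => ?_)⟩
    · exact (Finset.measurable_sum Finset.univ fun i _ => (hgm i).pow_const 2).aestronglyMeasurable
    · rw [Real.norm_eq_abs, abs_of_nonneg (Finset.sum_nonneg fun i _ => sq_nonneg _)]
      refine Finset.sum_le_sum fun i _ => ?_
      by_cases hs : t₀ < t <;> simp [hgdef, hs, sq_nonneg]
  -- kernel facts
  have hBm : ∀ i j, Measurable (Function.uncurry (B i j)) := fun i j => (hB i j).1.1
  have hB2 : ∀ i j, Integrable (fun p : ℝ × ℝ => B i j p.1 p.2 ^ 2) (μ.prod μ) :=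
    fun i j => (hB i j).1.2
  have hBbarm : ∀ i j, Measurable (Function.uncurry (Bbar i j)) := fun i j => (hBbar i j).1.1
  -- adjoint kernel (r,s) ↦ Bbar j i r s viewed as kernel in (s,r)
  have hAm : ∀ i j : Fin N, Measurable (Function.uncurry (fun s r => Bbar j i r s)) := by
    intro i j
    exact (hBbarm j i).comp measurable_swap
  have hA2 : ∀ i j : Fin N,
      Integrable (fun p : ℝ × ℝ => Bbar j i p.2 p.1 ^ 2) (μ.prod μ) := by
    intro i j
    exact ((hBbar j i).1.2).swap
  -- truncated kernels
  have hTBm : ∀ i j, Measurable (Function.uncurry (fun s r => if t₀ < r then B i j s r else 0)) := by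
    intro i j
    exact Measurable.ite (measurableSet_lt measurable_const measurable_snd) (hBm i j)
      measurable_const
  have hTB2 : ∀ i j, Integrable
      (fun p : ℝ × ℝ => (if t₀ < p.2 then B i j p.1 p.2 else 0) ^ 2) (μ.prod μ) := by
    intro i j
    refine (hB2 i j).mono' ((hTBm i j).pow_const 2).aestronglyMeasurable
      (Eventually.of_forall fun p => ?_)
    rw [Real.norm_eq_abs, abs_of_nonneg (sq_nonneg _)]
    by_cases hr : t₀ < p.2 <;> simp [hr, sq_nonneg]
  have hTAm : ∀ i j : Fin N,
      Measurable (Function.uncurry (fun s r => if t₀ < s then Bbar j i r s else 0)) := by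
    intro i j
    exact Measurable.ite (measurableSet_lt measurable_const measurable_fst) (hAm i j)
      measurable_const
  have hTA2 : ∀ i j : Fin N, Integrable
      (fun p : ℝ × ℝ => (if t₀ < p.1 then Bbar j i p.2 p.1 else 0) ^ 2) (μ.prod μ) := by
    intro i j
    refine (hA2 i j).mono' ((hTAm i j).pow_const 2).aestronglyMeasurable
      (Eventually.of_forall fun p => ?_)
    rw [Real.norm_eq_abs, abs_of_nonneg (sq_nonneg _)]
    by_cases hr : t₀ < p.1 <;> simp [hr, sq_nonneg]
  -- integrability of the goal-side summands
  have hInt1 : ∀ i j, Integrable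
      (fun s => f s i * ∫ r in Icc (0:ℝ) T, (if t₀ < r then B i j s r else 0) * f r j) μ :=
    fun i j => key_int T _ (hTBm i j) (hTB2 i j) _ _ (hf.1 i) (hfc2 i) (hf.1 j) (hfc2 j)
  have hInt2 : ∀ i j, Integrable
      (fun s => f s i * ∫ r in Icc (0:ℝ) T, (if t₀ < s then Bbar j i r s else 0) * f r j) μ :=
    fun i j => key_int T _ (hTAm i j) (hTA2 i j) _ _ (hf.1 i) (hfc2 i) (hf.1 j) (hfc2 j)
  -- integrability of the coercivity-side summands (with g)
  have hInt3 : ∀ i j, Integrable (fun s => g s i * opK T (B i j) (fun r => g r j) s) μ :=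
    fun i j => key_int T _ (hBm i j) (hB2 i j) _ _ (hgm i) (hgc2 i) (hgm j) (hgc2 j)
  have hInt4 : ∀ i j, Integrable (fun s => g s i * opKadj T (Bbar j i) (fun r => g r j) s) μ :=
    fun i j => key_int T _ (hAm i j) (hA2 i j) _ _ (hgm i) (hgc2 i) (hgm j) (hgc2 j)
  -- abbreviations for the two quadratic forms
  have hc := hcoerc g hgL2
  set Φ : ℝ → ℝ := fun s => ∑ i, f s i *
          (2 * lam i * f s i
            + (∑ j, ∫ r in Icc (0:ℝ) T, (if t₀ < r then B i j s r else 0) * f r j)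
            + (∑ j, ∫ r in Icc (0:ℝ) T, (if t₀ < s then Bbar j i r s else 0) * f r j)) with hΦdef
  set Ψ : ℝ → ℝ := fun t => ∑ i, g t i *
          ((∑ j, opK T (B i j) (fun s => g s j) t)
            + (∑ j, opKadj T (Bbar j i) (fun s => g s j) t) + 2 * lam i * g t i) with hΨdef
  set q : ℝ → ℝ := fun s => if t₀ < s then 0 else ∑ i, f s i ^ 2 with hqdef
  set h : ℝ → ℝ := fun s => if t₀ < s then 0 else ∑ i, 2 * lam i * f s i ^ 2 with hhdef
  -- integrability of Φ
  have hΦint : Integrable Φ μ := by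
    have hE : Integrable (fun s => ∑ i, (2 * lam i * f s i ^ 2
        + ((∑ j, f s i * ∫ r in Icc (0:ℝ) T, (if t₀ < r then B i j s r else 0) * f r j)
          + (∑ j, f s i * ∫ r in Icc (0:ℝ) T, (if t₀ < s then Bbar j i r s else 0) * f r j)))) μ :=
      integrable_finset_sum _ fun i _ => (((hfc2 i).const_mul (2 * lam i)).add
        ((integrable_finset_sum _ fun j _ => hInt1 i j).add
          (integrable_finset_sum _ fun j _ => hInt2 i j)))
    refine hE.congr (Eventually.of_forall fun s => ?_)
    rw [hΦdef]
    refine Finset.sum_congr rfl fun i _ => ?_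
    rw [← Finset.mul_sum, ← Finset.mul_sum]
    ring
  -- integrability of Ψ
  have hΨint : Integrable Ψ μ := by
    have hE : Integrable (fun t => ∑ i, (2 * lam i * g t i ^ 2
        + ((∑ j, g t i * opK T (B i j) (fun s => g s j) t)
          + (∑ j, g t i * opKadj T (Bbar j i) (fun s => g s j) t)))) μ :=
      integrable_finset_sum _ fun i _ => (((hgc2 i).const_mul (2 * lam i)).add
        ((integrable_finset_sum _ fun j _ => hInt3 i j).add
          (integrable_finset_sum _ fun j _ => hInt4 i j)))
    refine hE.congr (Eventually.of_forall fun t => ?_)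
    rw [hΨdef]
    refine Finset.sum_congr rfl fun i _ => ?_
    rw [← Finset.mul_sum, ← Finset.mul_sum]
    ring
  -- integrability of h and q
  have hhm : Measurable h := by
    rw [hhdef]
    exact Measurable.ite (measurableSet_lt measurable_const measurable_id) measurable_const
      (Finset.measurable_sum Finset.univ fun i _ => (measurable_const.mul ((hf.1 i).pow_const 2)))
  have hqm : Measurable q := by
    rw [hqdef]
    exact Measurable.ite (measurableSet_lt measurable_const measurable_id) measurable_const
      (Finset.measurable_sum Finset.univ fun i _ => ((hf.1 i).pow_const 2))
  have hsumint : Integrable (fun s => ∑ i, 2 * lam i * f s i ^ 2) μ :=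
    integrable_finset_sum _ fun i _ => (hfc2 i).const_mul _
  have hhint : Integrable h μ := by
    refine hsumint.mono' hhm.aestronglyMeasurable (Eventually.of_forall fun s => ?_)
    rw [hhdef]
    by_cases hs : t₀ < s
    · simp only [hs, if_true, norm_zero]
      exact Finset.sum_nonneg fun i _ => mul_nonneg (by linarith [hlam i]) (sq_nonneg _)
    · simp only [hs, if_false, Real.norm_eq_abs]
      rw [abs_of_nonneg (Finset.sum_nonneg fun i _ =>
        mul_nonneg (by linarith [hlam i]) (sq_nonneg _))]
  have hqint : Integrable q μ := by
    refine hf.2.mono' hqm.aestronglyMeasurable (Eventually.of_forall fun s => ?_)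
    rw [hqdef]
    by_cases hs : t₀ < s
    · simp only [hs, if_true, norm_zero]
      exact Finset.sum_nonneg fun i _ => sq_nonneg _
    · simp only [hs, if_false, Real.norm_eq_abs]
      rw [abs_of_nonneg (Finset.sum_nonneg fun i _ => sq_nonneg _)]
  -- pointwise decomposition Φ = Ψ + h
  have hpt : ∀ s, Φ s = Ψ s + h s := by
    intro s
    rw [hΦdef, hΨdef, hhdef]
    by_cases hs : t₀ < s
    · simp only [hs, if_true, add_zero]
      refine Finset.sum_congr rfl fun i _ => ?_
      have e1 : ∀ j, (∫ r in Icc (0:ℝ) T, (if t₀ < r then B i j s r else 0) * f r j)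
          = opK T (B i j) (fun r => g r j) s := by
        intro j
        simp only [opK]
        refine integral_congr_ae (Eventually.of_forall fun r => ?_)
        by_cases hr : t₀ < r
        · simp [hgdef, hr]
        · simp [hgdef, hr]
      have e2 : ∀ j, (∫ r in Icc (0:ℝ) T, Bbar j i r s * f r j)
          = opKadj T (Bbar j i) (fun r => g r j) s := by
        intro j
        simp only [opKadj]
        refine integral_congr_ae (Eventually.of_forall fun r => ?_)
        by_cases hr : t₀ < r
        · simp [hgdef, hr]
        · have hz : Bbar j i r s = 0 := (hBbar j i).2 r s (le_of_lt (lt_of_le_of_lt (not_lt.mp hr) hs))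
          simp [hgdef, hr, hz]
      simp only [e1, e2]
      have hgs : ∀ k : Fin N, g s k = f s k := fun k => if_pos hs
      rw [hgs i]
      ring
    · simp only [hs, if_false]
      have hgs : ∀ k : Fin N, g s k = 0 := fun k => if_neg hs
      have hΨ0 : (∑ i, g s i *
          ((∑ j, opK T (B i j) (fun r => g r j) s)
            + (∑ j, opKadj T (Bbar j i) (fun r => g r j) s) + 2 * lam i * g s i)) = 0 := by
        refine Finset.sum_eq_zero fun i _ => ?_
        rw [hgs i, zero_mul]
      rw [hΨ0, zero_add]
      refine Finset.sum_congr rfl fun i _ => ?_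
      have e1 : ∀ j, (∫ r in Icc (0:ℝ) T, (if t₀ < r then B i j s r else 0) * f r j) = 0 := by
        intro j
        have : ∀ r, (if t₀ < r then B i j s r else 0) * f r j = 0 := by
          intro r
          by_cases hr : t₀ < r
          · rw [if_pos hr, (hB i j).2 s r (le_of_lt (lt_of_le_of_lt (not_lt.mp hs) hr)), zero_mul]
          · rw [if_neg hr, zero_mul]
        simp only [this, integral_zero]
      simp only [e1, zero_mul, integral_zero, Finset.sum_const_zero, mul_zero, add_zero,
        zero_add]
      ring
  -- split the integral
  have hΦΨ : (∫ s in Icc (0:ℝ) T, Φ s) = (∫ t in Icc (0:ℝ) T, Ψ t) + ∫ s in Icc (0:ℝ) T, h s := by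
    rw [← integral_add hΨint hhint]
    exact integral_congr_ae (Eventually.of_forall fun s => hpt s)
  have hfgq : (∫ s in Icc (0:ℝ) T, ∑ i, f s i ^ 2)
      = (∫ s in Icc (0:ℝ) T, ∑ i, g s i ^ 2) + ∫ s in Icc (0:ℝ) T, q s := by
    rw [← integral_add hgL2.2 hqint]
    refine integral_congr_ae (Eventually.of_forall fun s => ?_)
    by_cases hs : t₀ < s <;> simp [hgdef, hqdef, hs]
  have hqnn : (0:ℝ) ≤ ∫ s in Icc (0:ℝ) T, q s := by
    refine integral_nonneg fun s => ?_
    rw [hqdef]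
    by_cases hs : t₀ < s
    · simp [hs]
    · simp only [hs, if_false]
      exact Finset.sum_nonneg fun i _ => sq_nonneg _
  have hgnn : (0:ℝ) ≤ ∫ s in Icc (0:ℝ) T, ∑ i, g s i ^ 2 :=
    integral_nonneg fun s => Finset.sum_nonneg fun i _ => sq_nonneg _
  have hqh : 2 * m * (∫ s in Icc (0:ℝ) T, q s) ≤ ∫ s in Icc (0:ℝ) T, h s := by
    rw [← integral_const_mul]
    refine integral_mono (hqint.const_mul _) hhint fun s => ?_
    rw [hqdef, hhdef]
    by_cases hs : t₀ < s
    · simp [hs]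
    · simp only [hs, if_false]
      rw [Finset.mul_sum]
      refine Finset.sum_le_sum fun i _ => ?_
      have hmi : m ≤ lam i := Finset.inf'_le lam (Finset.mem_univ i)
      nlinarith [sq_nonneg (f s i)]
  calc min c₀' (2 * m) * (∫ s in Icc (0:ℝ) T, ∑ i, f s i ^ 2)
      = min c₀' (2 * m) * (∫ s in Icc (0:ℝ) T, ∑ i, g s i ^ 2)
        + min c₀' (2 * m) * ∫ s in Icc (0:ℝ) T, q s := by rw [hfgq]; ring
    _ ≤ c₀' * (∫ s in Icc (0:ℝ) T, ∑ i, g s i ^ 2) + 2 * m * ∫ s in Icc (0:ℝ) T, q s :=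
        add_le_add (mul_le_mul_of_nonneg_right (min_le_left _ _) hgnn)
          (mul_le_mul_of_nonneg_right (min_le_right _ _) hqnn)
    _ ≤ (∫ t in Icc (0:ℝ) T, Ψ t) + ∫ s in Icc (0:ℝ) T, h s := add_le_add hc hqh
    _ = ∫ s in Icc (0:ℝ) T, Φ s := hΦΨ.symm
end
end

section
/- Let φ∈L²([0,1],ℝ) with ∫₀¹φ(u)²du=1 and 𝐖φ=θφ for some θ∈ℝ. Define the Volterra kernel C̃ := (Ã+θB̃)/(2λ) with induced operator 𝐂̃ on L²([0,T],ℝ). Then for every f∈L²([0,T],ℝ): ⟨f, f+𝐂̃f+𝐂̃*f⟩_{L²} ≥ (c_W/λ)⟨f,f⟩_{L²}. -/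
open MeasureTheory Set Filter

noncomputable section

variable {Ω : Type}

/-- A graphon: Borel-measurable, symmetric, `[0,1]`-valued. -/
def IsGraphon (W : ℝ → ℝ → ℝ) : Prop :=
  Measurable (Function.uncurry W) ∧ (∀ u v, W u v = W v u) ∧ ∀ u v, W u v ∈ Icc (0:ℝ) 1

/-- Membership in `L²([0,T]×[0,1],ℝ)` (first variable: time, second variable: label). -/
def MemL2TI (T : ℝ) (g : ℝ → ℝ → ℝ) : Prop :=
  Measurable (Function.uncurry g) ∧
    Integrable (fun p : ℝ × ℝ => (g p.1 p.2) ^ 2)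
      ((volume.restrict (Icc (0:ℝ) T)).prod (volume.restrict (Icc (0:ℝ) 1)))

/-- Objective functional `J^{u,W}` of player `u` in the graphon game. -/
def Jgr (T : ℝ) {mΩ : MeasurableSpace Ω} (P : Measure Ω)
    (Atil Btil Ctil : ℝ → ℝ → ℝ) (lam : ℝ) (W : ℝ → ℝ → ℝ)
    (b : ℝ → ℝ → Ω → ℝ) (bstar : ℝ → Ω → ℝ) (c : ℝ → Ω → ℝ)
    (u : ℝ) (α : ℝ → ℝ → Ω → ℝ) : ℝ :=
  ∫ ω,
    (- ip T (fun t => α u t ω)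
        (fun t => opK T Atil (fun s => α u s ω) t + lam * α u t ω)
      - ip T (fun t => α u t ω)
          (fun t => opK T Btil (fun s => ∫ v in Icc (0:ℝ) 1, W u v * α v s ω) t
            + opKadj T Btil (fun s => ∫ v in Icc (0:ℝ) 1, W u v * α v s ω) t)
      - ip T (fun t => ∫ v in Icc (0:ℝ) 1, W u v * α v t ω)
          (opK T Ctil (fun s => ∫ v in Icc (0:ℝ) 1, W u v * α v s ω))
      + ip T (fun t => b u t ω) (fun t => α u t ω)
      + ip T (fun t => bstar t ω) (fun t => ∫ v in Icc (0:ℝ) 1, W u v * α v t ω)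
      + c u ω) ∂P

/-- Admissible strategy profile of the graphon game. -/
def AdmProfile (T : ℝ) {mΩ : MeasurableSpace Ω} (F : Filtration ℝ mΩ) (P : Measure Ω)
    (α : ℝ → ℝ → Ω → ℝ) : Prop :=
  Measurable (fun q : ℝ × ℝ × Ω => α q.1 q.2.1 q.2.2) ∧
    (∀ u ∈ Icc (0:ℝ) 1, ProgMeasurable F (α u)) ∧
    (∀ᵐ u ∂(volume.restrict (Icc (0:ℝ) 1)), SqInt T P (α u)) ∧
    Integrable (fun q : ℝ × ℝ × Ω => (α q.1 q.2.1 q.2.2) ^ 2)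
      ((volume.restrict (Icc (0:ℝ) 1)).prod ((volume.restrict (Icc (0:ℝ) T)).prod P))

/-- Graphon game Nash equilibrium: for a.e. label `u`, the control `α u` maximizes
the objective of player `u` among all admissible deviations. -/
def IsGraphonNash (T : ℝ) {mΩ : MeasurableSpace Ω} (F : Filtration ℝ mΩ) (P : Measure Ω)
    (Atil Btil Ctil : ℝ → ℝ → ℝ) (lam : ℝ) (W : ℝ → ℝ → ℝ)
    (b : ℝ → ℝ → Ω → ℝ) (bstar : ℝ → Ω → ℝ) (c : ℝ → Ω → ℝ)
    (α : ℝ → ℝ → Ω → ℝ) : Prop :=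
  AdmProfile T F P α ∧
    ∀ᵐ u ∂(volume.restrict (Icc (0:ℝ) 1)),
      ∀ β : ℝ → Ω → ℝ, ProgMeasurable F β → SqInt T P β →
        Jgr T P Atil Btil Ctil lam W b bstar c u (Function.update α u β)
          ≤ Jgr T P Atil Btil Ctil lam W b bstar c u α

section AuxLemmas

private lemma finiteIcc (a b : ℝ) : IsFiniteMeasure (volume.restrict (Icc a b)) := by
  constructor
  rw [Measure.restrict_apply_univ, Real.volume_Icc]
  exact ENNReal.ofReal_lt_top

private lemma IsL2Kernel.adj' {T : ℝ} {G : ℝ → ℝ → ℝ} (hG : IsL2Kernel T G) :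
    IsL2Kernel T (fun t s => G s t) := by
  refine ⟨hG.1.comp measurable_swap, ?_⟩
  have := hG.2.swap
  exact this

private lemma kernel_sandwich_integrable {T : ℝ} {G : ℝ → ℝ → ℝ} {f : ℝ → ℝ}
    (hG : IsL2Kernel T G) (hf : MemL2 T f) :
    Integrable (fun p : ℝ × ℝ => f p.1 * (G p.1 p.2 * f p.2))
      ((volume.restrict (Icc (0:ℝ) T)).prod (volume.restrict (Icc (0:ℝ) T))) := by
  have hmeas : AEStronglyMeasurable (fun p : ℝ × ℝ => f p.1 * (G p.1 p.2 * f p.2))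
      ((volume.restrict (Icc (0:ℝ) T)).prod (volume.restrict (Icc (0:ℝ) T))) :=
    ((hf.1.comp measurable_fst).mul (hG.1.mul (hf.1.comp measurable_snd))).aestronglyMeasurable
  refine Integrable.mono'
    (g := fun p : ℝ × ℝ => ((f p.1)^2 * (f p.2)^2 + (G p.1 p.2)^2) / 2)
    (((hf.2.mul_prod hf.2).add hG.2).div_const 2) hmeas ?_
  refine Filter.Eventually.of_forall fun p => ?_
  rw [Real.norm_eq_abs, abs_le]
  constructor <;>
    nlinarith [sq_nonneg (f p.1 * f p.2 - G p.1 p.2), sq_nonneg (f p.1 * f p.2 + G p.1 p.2)]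

private lemma kernel_mul_integrable {T : ℝ} {G : ℝ → ℝ → ℝ} {f : ℝ → ℝ}
    (hG : IsL2Kernel T G) (hf : MemL2 T f) :
    Integrable (fun p : ℝ × ℝ => G p.1 p.2 * f p.2)
      ((volume.restrict (Icc (0:ℝ) T)).prod (volume.restrict (Icc (0:ℝ) T))) := by
  haveI := finiteIcc 0 T
  have h1 : Integrable (fun p : ℝ × ℝ => (f p.2)^2)
      ((volume.restrict (Icc (0:ℝ) T)).prod (volume.restrict (Icc (0:ℝ) T))) := by
    simpa using (integrable_const (1:ℝ)).mul_prod hf.2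
  refine Integrable.mono'
    (g := fun p : ℝ × ℝ => ((G p.1 p.2)^2 + (f p.2)^2) / 2)
    ((hG.2.add h1).div_const 2)
    ((hG.1.mul (hf.1.comp measurable_snd)).aestronglyMeasurable) ?_
  refine Filter.Eventually.of_forall fun p => ?_
  rw [Real.norm_eq_abs, abs_le]
  constructor <;>
    nlinarith [sq_nonneg (G p.1 p.2 - f p.2), sq_nonneg (G p.1 p.2 + f p.2)]

private lemma IsL2Kernel.combo {T : ℝ} {A B : ℝ → ℝ → ℝ} (hA : IsL2Kernel T A)
    (hB : IsL2Kernel T B) (θ c : ℝ) :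
    IsL2Kernel T (fun t s => (A t s + θ * B t s) / c) := by
  refine ⟨(hA.1.add (hB.1.const_mul θ)).div_const c, ?_⟩
  refine Integrable.mono'
    (g := fun p : ℝ × ℝ => (2 * (A p.1 p.2)^2 + (2 * θ^2) * (B p.1 p.2)^2) / c^2)
    (((hA.2.const_mul 2).add (hB.2.const_mul (2 * θ^2))).div_const (c^2))
    (((((hA.1.add (hB.1.const_mul θ)).div_const c)).pow_const 2).aestronglyMeasurable) ?_
  refine Filter.Eventually.of_forall fun p => ?_
  rw [Real.norm_eq_abs, abs_of_nonneg (sq_nonneg _), div_pow]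
  rcases eq_or_ne c 0 with hc | hc
  · simp [hc]
  · have hc2 : (0:ℝ) < c^2 := by positivity
    rw [div_le_div_iff₀ hc2 hc2]
    nlinarith [sq_nonneg (A p.1 p.2 - θ * B p.1 p.2), sq_nonneg c]

private lemma opK_mul_const (T : ℝ) (G : ℝ → ℝ → ℝ) (f : ℝ → ℝ) (c t : ℝ) :
    opK T G (fun s => f s * c) t = c * opK T G f t := by
  unfold opK
  have h : (fun s => G t s * (f s * c)) = fun s => c * (G t s * f s) := by
    funext s; ring
  rw [h, integral_const_mul]

/-- `∫ f ⋅ G*f = ∫ f ⋅ Gf` by Fubini. -/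
private lemma adj_pairing_eq {T : ℝ} {G : ℝ → ℝ → ℝ} {f : ℝ → ℝ}
    (hG : IsL2Kernel T G) (hf : MemL2 T f) :
    (∫ t in Icc (0:ℝ) T, f t * opKadj T G f t) =
      ∫ t in Icc (0:ℝ) T, f t * opK T G f t := by
  have h1 : (fun t => f t * opKadj T G f t)
      = fun t => ∫ s in Icc (0:ℝ) T, f t * (G s t * f s) :=
    funext fun t => (integral_const_mul _ _).symm
  rw [h1]
  have hint : Integrable (Function.uncurry fun t s => f t * (G s t * f s))
      ((volume.restrict (Icc (0:ℝ) T)).prod (volume.restrict (Icc (0:ℝ) T))) :=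
    kernel_sandwich_integrable hG.adj' hf
  rw [MeasureTheory.integral_integral_swap hint]
  have h2 : ∀ s, (∫ t in Icc (0:ℝ) T, f t * (G s t * f s)) = f s * opK T G f s := by
    intro s
    have h3 : (fun t => f t * (G s t * f s)) = fun t => f s * (G s t * f t) := by
      funext t; ring
    rw [h3, integral_const_mul]; rfl
  simp_rw [h2]

end AuxLemmas

/-- For an eigenpair `(θ, φ)` of the graphon operator, the kernel
`C̃ = (Ã + θB̃)/(2λ)` satisfies `⟨f, f + 𝐂̃f + 𝐂̃*f⟩ ≥ (c_W/λ)⟨f,f⟩`. -/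
theorem eigen_kernel_coercive
    (T : ℝ) (hT : 0 < T)
    (Atil Btil : ℝ → ℝ → ℝ)
    (hA : IsVolterraKernel T Atil) (hBk : IsVolterraKernel T Btil)
    (lam : ℝ) (hlam : 0 < lam)
    (W : ℝ → ℝ → ℝ) (hW : IsGraphon W)
    (cW : ℝ) (hcW : 0 < cW)
    (hcoerc : ∀ g : ℝ → ℝ → ℝ, MemL2TI T g →
      cW * (∫ u in Icc (0:ℝ) 1, ∫ t in Icc (0:ℝ) T, (g t u) ^ 2) ≤
        ∫ u in Icc (0:ℝ) 1, ∫ t in Icc (0:ℝ) T,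
          g t u * (lam * g t u + opK T Atil (fun s => g s u) t
            + opK T Btil (fun s => ∫ v in Icc (0:ℝ) 1, W u v * g s v) t))
    (φ : ℝ → ℝ) (hφmeas : Measurable φ)
    (hφL2 : Integrable (fun u => (φ u) ^ 2) (volume.restrict (Icc (0:ℝ) 1)))
    (hφnorm : (∫ u in Icc (0:ℝ) 1, (φ u) ^ 2) = 1)
    (θ : ℝ)
    (hEigen : ∀ᵐ u ∂(volume.restrict (Icc (0:ℝ) 1)),
      (∫ v in Icc (0:ℝ) 1, W u v * φ v) = θ * φ u)
 :
    ∀ f : ℝ → ℝ, MemL2 T f →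
      (cW / lam) * ip T f f ≤
        ip T f (fun t => f t
          + opK T (fun t' s => (Atil t' s + θ * Btil t' s) / (2 * lam)) f t
          + opKadj T (fun t' s => (Atil t' s + θ * Btil t' s) / (2 * lam)) f t) := by
  intro f hf
  haveI := finiteIcc (0:ℝ) T
  haveI := finiteIcc (0:ℝ) 1
  set C : ℝ → ℝ → ℝ := fun t' s => (Atil t' s + θ * Btil t' s) / (2 * lam) with hCdef
  have hC : IsL2Kernel T C := IsL2Kernel.combo hA.1 hBk.1 θ (2 * lam)
  set A0 : ℝ := ∫ t in Icc (0:ℝ) T, (f t)^2 with hA0def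
  set IA : ℝ := ∫ t in Icc (0:ℝ) T, f t * opK T Atil f t with hIAdef
  set IB : ℝ := ∫ t in Icc (0:ℝ) T, f t * opK T Btil f t with hIBdef
  -- integrability of the pairings
  have hiA : Integrable (fun t => f t * opK T Atil f t) (volume.restrict (Icc (0:ℝ) T)) := by
    have := (kernel_sandwich_integrable hA.1 hf).integral_prod_left
    have he : (fun t => f t * opK T Atil f t)
        = fun t => ∫ s in Icc (0:ℝ) T, f t * (Atil t s * f s) :=
      funext fun t => (integral_const_mul _ _).symm
    rw [he]; exact this
  have hiB : Integrable (fun t => f t * opK T Btil f t) (volume.restrict (Icc (0:ℝ) T)) := by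
    have := (kernel_sandwich_integrable hBk.1 hf).integral_prod_left
    have he : (fun t => f t * opK T Btil f t)
        = fun t => ∫ s in Icc (0:ℝ) T, f t * (Btil t s * f s) :=
      funext fun t => (integral_const_mul _ _).symm
    rw [he]; exact this
  have hiC : Integrable (fun t => f t * opK T C f t) (volume.restrict (Icc (0:ℝ) T)) := by
    have := (kernel_sandwich_integrable hC hf).integral_prod_left
    have he : (fun t => f t * opK T C f t)
        = fun t => ∫ s in Icc (0:ℝ) T, f t * (C t s * f s) :=
      funext fun t => (integral_const_mul _ _).symm
    rw [he]; exact this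
  have hiCadj : Integrable (fun t => f t * opKadj T C f t) (volume.restrict (Icc (0:ℝ) T)) := by
    have := (kernel_sandwich_integrable hC.adj' hf).integral_prod_left
    have he : (fun t => f t * opKadj T C f t)
        = fun t => ∫ s in Icc (0:ℝ) T, f t * (C s t * f s) :=
      funext fun t => (integral_const_mul _ _).symm
    rw [he]; exact this
  -- apply the coercivity hypothesis to g(t,u) = f t * φ u
  have hg : MemL2TI T (fun t u => f t * φ u) := by
    refine ⟨(hf.1.comp measurable_fst).mul (hφmeas.comp measurable_snd), ?_⟩
    simpa [mul_pow] using hf.2.mul_prod hφL2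
  have hkey := hcoerc (fun t u => f t * φ u) hg
  -- LHS of hkey
  have hLHS : (∫ u in Icc (0:ℝ) 1, ∫ t in Icc (0:ℝ) T, (f t * φ u)^2) = A0 := by
    have hinner : ∀ u, (∫ t in Icc (0:ℝ) T, (f t * φ u)^2) = A0 * (φ u)^2 := by
      intro u
      have he : (fun t => (f t * φ u)^2) = fun t => (f t)^2 * (φ u)^2 := by
        funext t; ring
      rw [he, integral_mul_const]
    simp_rw [hinner]
    rw [integral_const_mul, hφnorm, mul_one]
  -- RHS of hkey
  set D : ℝ := ∫ t in Icc (0:ℝ) T, f t * (lam * f t + opK T Atil f t + θ * opK T Btil f t)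
    with hDdef
  have hRHS : (∫ u in Icc (0:ℝ) 1, ∫ t in Icc (0:ℝ) T,
      (f t * φ u) * (lam * (f t * φ u) + opK T Atil (fun s => f s * φ u) t
        + opK T Btil (fun s => ∫ v in Icc (0:ℝ) 1, W u v * (f s * φ v)) t)) = D := by
    have hae : ∀ᵐ u ∂(volume.restrict (Icc (0:ℝ) 1)),
        (∫ t in Icc (0:ℝ) T,
          (f t * φ u) * (lam * (f t * φ u) + opK T Atil (fun s => f s * φ u) t
            + opK T Btil (fun s => ∫ v in Icc (0:ℝ) 1, W u v * (f s * φ v)) t))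
          = D * (φ u)^2 := by
      filter_upwards [hEigen] with u hu
      have hBker : (fun s => ∫ v in Icc (0:ℝ) 1, W u v * (f s * φ v))
          = fun s => f s * (θ * φ u) := by
        funext s
        have he : (fun v => W u v * (f s * φ v)) = fun v => f s * (W u v * φ v) := by
          funext v; ring
        rw [he, integral_const_mul, hu]
      rw [hBker]
      have hstep : (fun t => (f t * φ u) * (lam * (f t * φ u)
            + opK T Atil (fun s => f s * φ u) t + opK T Btil (fun s => f s * (θ * φ u)) t))
          = fun t => (f t * (lam * f t + opK T Atil f t + θ * opK T Btil f t)) * (φ u)^2 := by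
        funext t
        rw [opK_mul_const, opK_mul_const]
        ring
      rw [hstep, integral_mul_const]
    rw [integral_congr_ae hae, integral_const_mul, hφnorm, mul_one]
  rw [hLHS, hRHS] at hkey
  -- split D
  have hD : D = lam * A0 + IA + θ * IB := by
    have he : (fun t => f t * (lam * f t + opK T Atil f t + θ * opK T Btil f t))
        = fun t => (lam * (f t)^2 + f t * opK T Atil f t) + θ * (f t * opK T Btil f t) := by
      funext t; ring
    have i1 : Integrable (fun t => lam * (f t)^2 + f t * opK T Atil f t)
        (volume.restrict (Icc (0:ℝ) T)) := (hf.2.const_mul lam).add hiA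
    rw [hDdef, he, integral_add i1 (hiB.const_mul θ),
      integral_add (hf.2.const_mul lam) hiA, integral_const_mul, integral_const_mul]
  -- pairing with C
  have hICeq : (∫ t in Icc (0:ℝ) T, f t * opK T C f t) = (1/(2*lam)) * (IA + θ * IB) := by
    have haeC : ∀ᵐ t ∂(volume.restrict (Icc (0:ℝ) T)),
        f t * opK T C f t
          = (1/(2*lam)) * (f t * opK T Atil f t + θ * (f t * opK T Btil f t)) := by
      filter_upwards [(kernel_mul_integrable hA.1 hf).prod_right_ae,
        (kernel_mul_integrable hBk.1 hf).prod_right_ae] with t hAt hBt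
      have he : (fun s => C t s * f s)
          = fun s => (1/(2*lam)) * (Atil t s * f s + θ * (Btil t s * f s)) := by
        funext s; simp only [hCdef]; ring
      have : opK T C f t = (1/(2*lam)) * (opK T Atil f t + θ * opK T Btil f t) := by
        unfold opK
        have i3 : Integrable (fun s => Atil t s * f s + θ * (Btil t s * f s))
            (volume.restrict (Icc (0:ℝ) T)) := hAt.add (hBt.const_mul θ)
        rw [he, integral_const_mul, integral_add hAt (hBt.const_mul θ), integral_const_mul]
      rw [this]; ring
    rw [integral_congr_ae haeC, integral_const_mul,
      integral_add hiA (hiB.const_mul θ), integral_const_mul]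
  have hICadj : (∫ t in Icc (0:ℝ) T, f t * opKadj T C f t)
      = (1/(2*lam)) * (IA + θ * IB) := by
    rw [adj_pairing_eq hC hf, hICeq]
  -- assemble the goal
  have hipff : ip T f f = A0 := by
    unfold ip
    have he : (fun t => f t * f t) = fun t => (f t)^2 := by funext t; ring
    rw [he]
  have hipRHS : ip T f (fun t => f t + opK T C f t + opKadj T C f t)
      = A0 + (1/(2*lam)) * (IA + θ * IB) + (1/(2*lam)) * (IA + θ * IB) := by
    unfold ip
    have he : (fun t => f t * (f t + opK T C f t + opKadj T C f t))
        = fun t => ((f t)^2 + f t * opK T C f t) + f t * opKadj T C f t := by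
      funext t; ring
    have i2 : Integrable (fun t => (f t)^2 + f t * opK T C f t)
        (volume.restrict (Icc (0:ℝ) T)) := hf.2.add hiC
    rw [he, integral_add i2 hiCadj, integral_add hf.2 hiC, hICeq, hICadj]
  rw [hipff]
  show (cW / lam) * A0 ≤ ip T f (fun t => f t + opK T C f t + opKadj T C f t)
  rw [hipRHS]
  rw [hD] at hkey
  rw [div_mul_eq_mul_div, div_le_iff₀ hlam]
  have h2l : (1/(2*lam)) * (IA + θ * IB) * lam = (IA + θ * IB) / 2 := by
    field_simp
  nlinarith [hkey]
end
end

section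
/- Assume additionally c_W ≤ λ. Let φ∈L²([0,1],ℝ) with ∫₀¹φ(u)²du=1 and 𝐖φ=θφ for some θ∈ℝ, and define C̃ := (Ã+θB̃)/(2λ). For t∈[0,T], let C̃_t(s,r):=1_{{r>t}}C̃(s,r) be the truncated kernel with induced operator 𝐂̃_t. Then for every t∈[0,T] and every f∈L²([0,T],ℝ): ⟨f, f+𝐂̃_t f+(𝐂̃_t)*f⟩_{L²} ≥ (c_W/λ)⟨f,f⟩_{L²}. -/
open MeasureTheory Set Filter

noncomputable section

variable {Ω : Type}

/-- Auxiliary: product integrability of `a(x) K(x,y) b(y)` from `L²` data. -/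
lemma aux_prod_int {μ ν : Measure ℝ} [SigmaFinite μ] [SigmaFinite ν]
    {K : ℝ → ℝ → ℝ} {a b : ℝ → ℝ}
    (hK : Measurable (Function.uncurry K))
    (hK2 : Integrable (fun p : ℝ × ℝ => (K p.1 p.2) ^ 2) (μ.prod ν))
    (ha : Measurable a) (hb : Measurable b)
    (ha2 : Integrable (fun x => (a x) ^ 2) μ) (hb2 : Integrable (fun x => (b x) ^ 2) ν) :
    Integrable (fun p : ℝ × ℝ => a p.1 * (K p.1 p.2 * b p.2)) (μ.prod ν) := by
  have hmeas : AEStronglyMeasurable (fun p : ℝ × ℝ => a p.1 * (K p.1 p.2 * b p.2)) (μ.prod ν) :=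
    ((ha.comp measurable_fst).mul (hK.mul (hb.comp measurable_snd))).aestronglyMeasurable
  refine ((hK2.add (ha2.mul_prod hb2)).div_const 2).mono' hmeas ?_
  filter_upwards with p
  rw [Real.norm_eq_abs]
  have h1 : |a p.1 * (K p.1 p.2 * b p.2)| = |K p.1 p.2| * |a p.1 * b p.2| := by
    rw [abs_mul, abs_mul, abs_mul]; ring
  rw [h1]
  simp only [Pi.add_apply]
  nlinarith [sq_abs (K p.1 p.2), sq_abs (a p.1 * b p.2),
    sq_nonneg (|K p.1 p.2| - |a p.1 * b p.2|)]

/-- If moreover `c_W ≤ λ`, the truncated kernels `C̃_t` satisfy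
`⟨f, f + 𝐂̃_t f + (𝐂̃_t)* f⟩ ≥ (c_W/λ)⟨f,f⟩` for every `t ∈ [0,T]`. -/
theorem eigen_kernel_truncated_coercive
    (T : ℝ) (hT : 0 < T)
    (Atil Btil : ℝ → ℝ → ℝ)
    (hA : IsVolterraKernel T Atil) (hBk : IsVolterraKernel T Btil)
    (lam : ℝ) (hlam : 0 < lam)
    (W : ℝ → ℝ → ℝ) (hW : IsGraphon W)
    (cW : ℝ) (hcW : 0 < cW)
    (hcoerc : ∀ g : ℝ → ℝ → ℝ, MemL2TI T g →
      cW * (∫ u in Icc (0:ℝ) 1, ∫ t in Icc (0:ℝ) T, (g t u) ^ 2) ≤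
        ∫ u in Icc (0:ℝ) 1, ∫ t in Icc (0:ℝ) T,
          g t u * (lam * g t u + opK T Atil (fun s => g s u) t
            + opK T Btil (fun s => ∫ v in Icc (0:ℝ) 1, W u v * g s v) t))
    (φ : ℝ → ℝ) (hφmeas : Measurable φ)
    (hφL2 : Integrable (fun u => (φ u) ^ 2) (volume.restrict (Icc (0:ℝ) 1)))
    (hφnorm : (∫ u in Icc (0:ℝ) 1, (φ u) ^ 2) = 1)
    (θ : ℝ)
    (hEigen : ∀ᵐ u ∂(volume.restrict (Icc (0:ℝ) 1)),
      (∫ v in Icc (0:ℝ) 1, W u v * φ v) = θ * φ u)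
    (hcWlam : cW ≤ lam) :
    ∀ t₀ ∈ Icc (0:ℝ) T, ∀ f : ℝ → ℝ, MemL2 T f →
      (cW / lam) * ip T f f ≤
        ip T f (fun s => f s
          + (∫ r in Icc (0:ℝ) T,
              (if t₀ < r then (Atil s r + θ * Btil s r) / (2 * lam) else 0) * f r)
          + (∫ r in Icc (0:ℝ) T,
              (if t₀ < s then (Atil r s + θ * Btil r s) / (2 * lam) else 0) * f r)) := by
  obtain ⟨⟨hAm, hA2⟩, hAvol⟩ := hA
  obtain ⟨⟨hBm, hB2⟩, hBvol⟩ := hBk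
  intro t₀ ht₀ f hf
  obtain ⟨hfm, hf2⟩ := hf
  set μ := volume.restrict (Icc (0:ℝ) T) with hμdef
  set ν := volume.restrict (Icc (0:ℝ) 1) with hνdef
  set h : ℝ → ℝ := fun r => if t₀ < r then f r else 0 with hhdef
  have hhm : Measurable h := Measurable.ite measurableSet_Ioi hfm measurable_const
  have hsqle : ∀ r, h r ^ 2 ≤ f r ^ 2 := by
    intro r; simp only [hhdef]; split_ifs
    · exact le_rfl
    · simpa using sq_nonneg (f r)
  have hh2 : Integrable (fun r => h r ^ 2) μ := by
    refine hf2.mono' (hhm.pow_const 2).aestronglyMeasurable ?_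
    filter_upwards with r
    rw [Real.norm_eq_abs, abs_of_nonneg (sq_nonneg _)]
    exact hsqle r
  have h2lam : (2:ℝ) * lam ≠ 0 := by positivity
  set K' : ℝ → ℝ → ℝ := fun s r => (Atil s r + θ * Btil s r) / (2 * lam) with hK'def
  have hK'vol : ∀ s r, s ≤ r → K' s r = 0 := by
    intro s r hsr; simp [hK'def, hAvol s r hsr, hBvol s r hsr]
  -- product integrabilities
  have hFA : Integrable (fun p : ℝ × ℝ => h p.1 * (Atil p.1 p.2 * h p.2)) (μ.prod μ) :=
    aux_prod_int hAm hA2 hhm hhm hh2 hh2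
  have hFB : Integrable (fun p : ℝ × ℝ => h p.1 * (Btil p.1 p.2 * h p.2)) (μ.prod μ) :=
    aux_prod_int hBm hB2 hhm hhm hh2 hh2
  have eK : (fun p : ℝ × ℝ => h p.1 * (K' p.1 p.2 * h p.2))
      = fun p : ℝ × ℝ => (1 / (2*lam)) * (h p.1 * (Atil p.1 p.2 * h p.2))
          + (θ / (2*lam)) * (h p.1 * (Btil p.1 p.2 * h p.2)) := by
    funext p; simp only [hK'def]; field_simp
  have hFK : Integrable (fun p : ℝ × ℝ => h p.1 * (K' p.1 p.2 * h p.2)) (μ.prod μ) := by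
    rw [eK]; exact ((hFA.const_mul _).add (hFB.const_mul _))
  have hFKswap : Integrable (fun p : ℝ × ℝ => h p.1 * (K' p.2 p.1 * h p.2)) (μ.prod μ) := by
    have e : (fun p : ℝ × ℝ => h p.1 * (K' p.2 p.1 * h p.2))
        = (fun p : ℝ × ℝ => h p.1 * (K' p.1 p.2 * h p.2)) ∘ Prod.swap := by
      funext p; simp only [Function.comp_apply, Prod.fst_swap, Prod.snd_swap]; ring
    rw [e]; exact hFK.swap
  -- scalars
  set F2 : ℝ := ∫ t, f t ^ 2 ∂μ with hF2def
  set H : ℝ := ∫ t, h t ^ 2 ∂μ with hHdef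
  set IA : ℝ := ∫ p, h p.1 * (Atil p.1 p.2 * h p.2) ∂(μ.prod μ) with hIAdef
  set IB : ℝ := ∫ p, h p.1 * (Btil p.1 p.2 * h p.2) ∂(μ.prod μ) with hIBdef
  set Q : ℝ := ∫ p, h p.1 * (K' p.1 p.2 * h p.2) ∂(μ.prod μ) with hQdef
  have hQsplit : Q = (1/(2*lam)) * IA + (θ/(2*lam)) * IB := by
    rw [hQdef, eK, integral_add (hFA.const_mul _) (hFB.const_mul _),
      integral_const_mul, integral_const_mul]
  -- apply coercivity to g(t,u) = h t * φ u
  have hgL2 : MemL2TI T (fun t u => h t * φ u) := by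
    constructor
    · exact (hhm.comp measurable_fst).mul (hφmeas.comp measurable_snd)
    · have e : (fun p : ℝ × ℝ => ((fun t u => h t * φ u) p.1 p.2) ^ 2)
          = fun p : ℝ × ℝ => (h p.1 ^ 2) * (φ p.2 ^ 2) := by funext p; ring
      exact e ▸ (hh2.mul_prod hφL2)
  have hco := hcoerc (fun t u => h t * φ u) hgL2
  have hLHSeq : (∫ u, (∫ t, (h t * φ u) ^ 2 ∂μ) ∂ν) = H := by
    have e1 : ∀ u, (∫ t, (h t * φ u) ^ 2 ∂μ) = H * φ u ^ 2 := by
      intro u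
      simp only [mul_pow]
      rw [integral_mul_const]
    calc (∫ u, (∫ t, (h t * φ u) ^ 2 ∂μ) ∂ν) = ∫ u, H * φ u ^ 2 ∂ν :=
          integral_congr_ae (ae_of_all _ e1)
      _ = H * ∫ u, φ u ^ 2 ∂ν := integral_const_mul _ _
      _ = H := by rw [hφnorm, mul_one]
  set Kc : ℝ := ∫ t, h t * (lam * h t + opK T Atil h t + θ * opK T Btil h t) ∂μ with hKcdef
  have hRHSeq : (∫ u, (∫ t, (h t * φ u) * (lam * (h t * φ u)
      + opK T Atil (fun s => h s * φ u) t
      + opK T Btil (fun s => ∫ v, W u v * (h s * φ v) ∂ν) t) ∂μ) ∂ν) = Kc := by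
    have e : ∀ᵐ u ∂ν, (∫ t, (h t * φ u) * (lam * (h t * φ u)
        + opK T Atil (fun s => h s * φ u) t
        + opK T Btil (fun s => ∫ v, W u v * (h s * φ v) ∂ν) t) ∂μ) = φ u ^ 2 * Kc := by
      filter_upwards [hEigen] with u hu
      have eA : ∀ t, opK T Atil (fun s => h s * φ u) t = opK T Atil h t * φ u := by
        intro t; unfold opK
        rw [← integral_mul_const]
        exact integral_congr_ae (ae_of_all _ fun s => by ring)
      have eB : ∀ t, opK T Btil (fun s => ∫ v, W u v * (h s * φ v) ∂ν) t
          = opK T Btil h t * (θ * φ u) := by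
        intro t; unfold opK
        have ein : ∀ s, (∫ v, W u v * (h s * φ v) ∂ν) = h s * (θ * φ u) := by
          intro s
          calc (∫ v, W u v * (h s * φ v) ∂ν) = ∫ v, h s * (W u v * φ v) ∂ν :=
                integral_congr_ae (ae_of_all _ fun v => by ring)
            _ = h s * ∫ v, W u v * φ v ∂ν := integral_const_mul _ _
            _ = h s * (θ * φ u) := by rw [hu]
        calc (∫ s, Btil t s * (∫ v, W u v * (h s * φ v) ∂ν) ∂μ)
            = ∫ s, Btil t s * (h s * (θ * φ u)) ∂μ :=
              integral_congr_ae (ae_of_all _ fun s => by simp only [ein])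
          _ = (∫ s, Btil t s * h s ∂μ) * (θ * φ u) := by
              rw [← integral_mul_const]
              exact integral_congr_ae (ae_of_all _ fun s => by ring)
      calc (∫ t, (h t * φ u) * (lam * (h t * φ u)
            + opK T Atil (fun s => h s * φ u) t
            + opK T Btil (fun s => ∫ v, W u v * (h s * φ v) ∂ν) t) ∂μ)
          = ∫ t, φ u ^ 2 * (h t * (lam * h t + opK T Atil h t + θ * opK T Btil h t)) ∂μ :=
            integral_congr_ae (ae_of_all _ fun t => by simp only [eA, eB]; ring)
        _ = φ u ^ 2 * Kc := integral_const_mul _ _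
    calc (∫ u, (∫ t, (h t * φ u) * (lam * (h t * φ u)
          + opK T Atil (fun s => h s * φ u) t
          + opK T Btil (fun s => ∫ v, W u v * (h s * φ v) ∂ν) t) ∂μ) ∂ν)
        = ∫ u, φ u ^ 2 * Kc ∂ν := integral_congr_ae e
      _ = (∫ u, φ u ^ 2 ∂ν) * Kc := integral_mul_const _ _
      _ = Kc := by rw [hφnorm, one_mul]
  rw [hLHSeq, hRHSeq] at hco
  -- split Kc
  have hIAint : Integrable (fun t => ∫ r, h t * (Atil t r * h r) ∂μ) μ := hFA.integral_prod_left
  have hIBint : Integrable (fun t => ∫ r, h t * (Btil t r * h r) ∂μ) μ := hFB.integral_prod_left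
  have hAh : ∀ t, h t * opK T Atil h t = ∫ r, h t * (Atil t r * h r) ∂μ := by
    intro t; unfold opK; exact (integral_const_mul _ _).symm
  have hBh : ∀ t, h t * opK T Btil h t = ∫ r, h t * (Btil t r * h r) ∂μ := by
    intro t; unfold opK; exact (integral_const_mul _ _).symm
  have hKcsplit : Kc = lam * H + IA + θ * IB := by
    have e : ∀ t, h t * (lam * h t + opK T Atil h t + θ * opK T Btil h t)
        = lam * h t ^ 2 + (∫ r, h t * (Atil t r * h r) ∂μ)
          + θ * (∫ r, h t * (Btil t r * h r) ∂μ) := by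
      intro t; rw [← hAh t, ← hBh t]; ring
    rw [hKcdef]
    calc (∫ t, h t * (lam * h t + opK T Atil h t + θ * opK T Btil h t) ∂μ)
        = ∫ t, (lam * h t ^ 2 + (∫ r, h t * (Atil t r * h r) ∂μ)
            + θ * (∫ r, h t * (Btil t r * h r) ∂μ)) ∂μ :=
          integral_congr_ae (ae_of_all _ e)
      _ = (∫ t, (lam * h t ^ 2 + ∫ r, h t * (Atil t r * h r) ∂μ) ∂μ)
          + ∫ t, θ * (∫ r, h t * (Btil t r * h r) ∂μ) ∂μ :=
        integral_add ((hh2.const_mul lam).add hIAint) (hIBint.const_mul θ)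
      _ = lam * H + IA + θ * IB := by
          have e2 : (∫ t, (lam * h t ^ 2 + ∫ r, h t * (Atil t r * h r) ∂μ) ∂μ)
              = (∫ t, lam * h t ^ 2 ∂μ) + ∫ t, (∫ r, h t * (Atil t r * h r) ∂μ) ∂μ :=
            integral_add (hh2.const_mul lam) hIAint
          have eIA : (∫ t, (∫ r, h t * (Atil t r * h r) ∂μ) ∂μ) = IA :=
            integral_integral (f := fun t r => h t * (Atil t r * h r)) hFA
          have eIB : (∫ t, (∫ r, h t * (Btil t r * h r) ∂μ) ∂μ) = IB :=
            integral_integral (f := fun t r => h t * (Btil t r * h r)) hFB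
          rw [e2, eIA, integral_const_mul, integral_const_mul, eIB]
  -- Fubini for the adjoint term
  have hQiter : (∫ t, ∫ r, h t * (K' t r * h r) ∂μ ∂μ) = Q := integral_integral hFK
  have hQadj : (∫ t, ∫ r, h t * (K' r t * h r) ∂μ ∂μ) = Q := by
    calc (∫ t, ∫ r, h t * (K' r t * h r) ∂μ ∂μ)
        = ∫ r, ∫ t, h t * (K' r t * h r) ∂μ ∂μ :=
          integral_integral_swap (f := fun t r => h t * (K' r t * h r)) hFKswap
      _ = ∫ r, ∫ t, h r * (K' r t * h t) ∂μ ∂μ :=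
          integral_congr_ae (ae_of_all _ fun r =>
            integral_congr_ae (ae_of_all _ fun t => by ring))
      _ = Q := integral_integral hFK
  -- rewrite the goal
  have hipff : ip T f f = F2 := integral_congr_ae (ae_of_all _ fun t => by ring)
  have hI1 : Integrable (fun t => ∫ r, h t * (K' t r * h r) ∂μ) μ := hFK.integral_prod_left
  have hI2 : Integrable (fun t => ∫ r, h t * (K' r t * h r) ∂μ) μ := hFKswap.integral_prod_left
  have eXzero : ∀ s, s ≤ t₀ → (∫ r, K' s r * h r ∂μ) = 0 := by
    intro s hs
    have e0 : ∀ r, K' s r * h r = 0 := by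
      intro r
      by_cases hr : t₀ < r
      · rw [hK'vol s r (le_trans hs hr.le), zero_mul]
      · simp [hhdef, hr]
    calc (∫ r, K' s r * h r ∂μ) = ∫ r, (0:ℝ) ∂μ := integral_congr_ae (ae_of_all _ e0)
      _ = 0 := integral_zero _ _
  have eX : ∀ s, (∫ r in Icc (0:ℝ) T,
      (if t₀ < r then (Atil s r + θ * Btil s r) / (2 * lam) else 0) * f r)
      = ∫ r, K' s r * h r ∂μ := by
    intro s
    refine integral_congr_ae (ae_of_all _ fun r => ?_)
    by_cases hr : t₀ < r
    · simp [hK'def, hhdef, hr]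
    · simp [hhdef, hr]
  have eY : ∀ s, (∫ r in Icc (0:ℝ) T,
      (if t₀ < s then (Atil r s + θ * Btil r s) / (2 * lam) else 0) * f r)
      = if t₀ < s then (∫ r, K' r s * h r ∂μ) else 0 := by
    intro s
    by_cases hs : t₀ < s
    · simp only [hs, if_true]
      refine integral_congr_ae (ae_of_all _ fun r => ?_)
      by_cases hr : t₀ < r
      · simp [hK'def, hhdef, hr]
      · simp [hK'def, hhdef, hr, hAvol r s (le_trans (not_lt.1 hr) hs.le),
          hBvol r s (le_trans (not_lt.1 hr) hs.le)]
    · simp [hs]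
  have e : ∀ s, f s * (f s + (∫ r in Icc (0:ℝ) T,
      (if t₀ < r then (Atil s r + θ * Btil s r) / (2 * lam) else 0) * f r)
      + (∫ r in Icc (0:ℝ) T,
      (if t₀ < s then (Atil r s + θ * Btil r s) / (2 * lam) else 0) * f r))
      = f s ^ 2 + (∫ r, h s * (K' s r * h r) ∂μ) + (∫ r, h s * (K' r s * h r) ∂μ) := by
    intro s
    rw [eX s, eY s]
    have m1 : (∫ r, h s * (K' s r * h r) ∂μ) = h s * ∫ r, K' s r * h r ∂μ :=
      integral_const_mul _ _
    have m2 : (∫ r, h s * (K' r s * h r) ∂μ) = h s * ∫ r, K' r s * h r ∂μ :=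
      integral_const_mul _ _
    by_cases hs : t₀ < s
    · have hfs : h s = f s := by simp [hhdef, hs]
      rw [m1, m2, hfs]
      simp only [hs, if_true]
      ring
    · have h0 : h s = 0 := by simp [hhdef, hs]
      rw [m1, m2, h0, eXzero s (not_lt.1 hs)]
      simp only [hs, if_false]
      ring
  have hRHSval : ip T f (fun s => f s
      + (∫ r in Icc (0:ℝ) T,
          (if t₀ < r then (Atil s r + θ * Btil s r) / (2 * lam) else 0) * f r)
      + (∫ r in Icc (0:ℝ) T,
          (if t₀ < s then (Atil r s + θ * Btil r s) / (2 * lam) else 0) * f r))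
      = F2 + Q + Q := by
    unfold ip
    calc (∫ t, f t * (f t + (∫ r in Icc (0:ℝ) T,
          (if t₀ < r then (Atil t r + θ * Btil t r) / (2 * lam) else 0) * f r)
          + (∫ r in Icc (0:ℝ) T,
          (if t₀ < t then (Atil r t + θ * Btil r t) / (2 * lam) else 0) * f r)) ∂μ)
        = ∫ t, (f t ^ 2 + (∫ r, h t * (K' t r * h r) ∂μ)
            + (∫ r, h t * (K' r t * h r) ∂μ)) ∂μ :=
          integral_congr_ae (ae_of_all _ e)
      _ = (∫ t, (f t ^ 2 + ∫ r, h t * (K' t r * h r) ∂μ) ∂μ)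
          + ∫ t, (∫ r, h t * (K' r t * h r) ∂μ) ∂μ :=
        integral_add (hf2.add hI1) hI2
      _ = F2 + Q + Q := by
          have e2 : (∫ t, (f t ^ 2 + ∫ r, h t * (K' t r * h r) ∂μ) ∂μ)
              = (∫ t, f t ^ 2 ∂μ) + ∫ t, (∫ r, h t * (K' t r * h r) ∂μ) ∂μ :=
            integral_add hf2 hI1
          rw [e2, hQiter, hQadj]
  rw [hipff, hRHSval]
  -- final arithmetic
  have hHF : H ≤ F2 := integral_mono hh2 hf2 hsqle
  have hmain : cW * H ≤ lam * H + 2 * lam * Q := by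
    rw [hKcsplit] at hco
    have h2 : 2 * lam * Q = IA + θ * IB := by
      rw [hQsplit]; field_simp
    linarith
  rw [div_mul_eq_mul_div, div_le_iff₀ hlam]
  nlinarith [mul_le_mul_of_nonpos_left hHF (by linarith : cW - lam ≤ 0)]
end
end

section
/- Assume Assumption (G1) holds for the N-player graph game with matrix w^N and noises b^{1,N},…,b^{N,N}, Assumption (G3) holds, and 𝐀̃ is nonnegative definite (⟨f,𝐀̃f⟩_{L²,1}≥0 for all f∈L²([0,T],ℝ)). Then α^N=(α^{1,N},…,α^{N,N})∈𝒜^N is a Nash equilibrium of the N-player graph game if and only if the step profile α^N_step (α^{u,N}_step := α^{i,N} for u∈𝒫^N_i) is a graphon game Nash equilibrium of the graphon game whose graphon is the step graphon W^N of w^N and whose label-indexed noise is the step noise b^N_step (b^{u,N}_step := b^{i,N} for u∈𝒫^N_i), with the same common noise b* and Volterra kernels Ã,B̃,C̃ and constant λ. -/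
open MeasureTheory Set Filter

noncomputable section

variable {Ω : Type}

/-- Objective functional `J₀^{i,N}` of player `i` in the `N`-player game on a weighted
graph with interaction matrix `w`. -/
def Jgraph (T : ℝ) {mΩ : MeasurableSpace Ω} (P : Measure Ω) {N : ℕ}
    (Atil Btil Ctil : ℝ → ℝ → ℝ) (lam : ℝ) (w : Fin N → Fin N → ℝ)
    (b : Fin N → ℝ → Ω → ℝ) (bstar : ℝ → Ω → ℝ) (c : Fin N → Ω → ℝ)
    (i : Fin N) (α : Fin N → ℝ → Ω → ℝ) : ℝ :=
  ∫ ω,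
    (- ip T (fun t => α i t ω)
        (fun t => opK T Atil (fun s => α i s ω) t + lam * α i t ω)
      - (1 / (N:ℝ)) * ∑ j, w i j *
          ip T (fun t => α i t ω)
            (fun t => opK T Btil (fun s => α j s ω) t + opKadj T Btil (fun s => α j s ω) t)
      - (1 / (N:ℝ)^2) * ∑ j, ∑ k, w i j * w i k *
          ip T (fun t => α j t ω) (opK T Ctil (fun s => α k s ω))
      + ip T (fun t => b i t ω) (fun t => α i t ω)
      + (1 / (N:ℝ)) * ∑ j, w i j * ip T (fun t => bstar t ω) (fun t => α j t ω)
      + c i ω) ∂P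

/-- Nash equilibrium of the `N`-player graph game. -/
def IsNashGraph (T : ℝ) {mΩ : MeasurableSpace Ω} (F : Filtration ℝ mΩ) (P : Measure Ω) {N : ℕ}
    (Atil Btil Ctil : ℝ → ℝ → ℝ) (lam : ℝ) (w : Fin N → Fin N → ℝ)
    (b : Fin N → ℝ → Ω → ℝ) (bstar : ℝ → Ω → ℝ) (c : Fin N → Ω → ℝ)
    (α : Fin N → ℝ → Ω → ℝ) : Prop :=
  (∀ i, Admissible T F P (α i)) ∧
    ∀ (i : Fin N) (β : ℝ → Ω → ℝ), Admissible T F P β →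
      Jgraph T P Atil Btil Ctil lam w b bstar c i (Function.update α i β)
        ≤ Jgraph T P Atil Btil Ctil lam w b bstar c i α

/-- Assumption (G2): coercivity of `λI + 𝐀̃ + (1/N) w ⋅ 𝐁̃` on `L²([0,T],ℝ^N)`. -/
def CoercGraph (T : ℝ) {N : ℕ} (Atil Btil : ℝ → ℝ → ℝ) (lam : ℝ)
    (w : Fin N → Fin N → ℝ) (c₀ : ℝ) : Prop :=
  ∀ f : ℝ → Fin N → ℝ, MemL2N T f →
    c₀ * (∫ t in Icc (0:ℝ) T, ∑ i, (f t i) ^ 2) ≤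
      ∫ t in Icc (0:ℝ) T, ∑ i, f t i *
        (lam * f t i + opK T Atil (fun s => f s i) t
          + (1 / (N:ℝ)) * ∑ j, w i j * opK T Btil (fun s => f s j) t)

/-- Index of the partition interval `𝒫^N_i` containing `u`. -/
def stepIdx (N : ℕ) (u : ℝ) : ℕ := min (Nat.floor (u * (N:ℝ))) (N - 1)

/-- Step function on `[0,1]` built from an `N`-tuple (with junk value `x₀` if `N = 0`). -/
def stepOf {X : Type*} (x₀ : X) (N : ℕ) (g : Fin N → X) (u : ℝ) : X :=
  if h : stepIdx N u < N then g ⟨stepIdx N u, h⟩ else x₀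

/-- Step graphon associated with the `N × N` interaction matrix `w`. -/
def stepW (N : ℕ) (w : Fin N → Fin N → ℝ) (u v : ℝ) : ℝ :=
  stepOf 0 N (fun i => stepOf 0 N (fun j => w i j) v) u

/-! ### Auxiliary lemmas -/

section Aux

lemma stepIdx_lt {N : ℕ} (hN : 0 < N) (u : ℝ) : stepIdx N u < N :=
  lt_of_le_of_lt (min_le_right _ _) (Nat.sub_lt hN one_pos)

/-- Index of `u` as an element of `Fin N`. -/
def finIdx (N : ℕ) (hN : 0 < N) (u : ℝ) : Fin N := ⟨stepIdx N u, stepIdx_lt hN u⟩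

lemma stepOf_eq {X : Type*} (x₀ : X) {N : ℕ} (hN : 0 < N) (g : Fin N → X) (u : ℝ) :
    stepOf x₀ N g u = g (finIdx N hN u) := by
  rw [stepOf, dif_pos (stepIdx_lt hN u)]; rfl

lemma finIdx_eq {N : ℕ} (hN : 0 < N) (i : Fin N) {u : ℝ}
    (hu : u ∈ Ico ((i : ℝ) / N) (((i : ℝ) + 1) / N)) : finIdx N hN u = i := by
  have hNpos : (0 : ℝ) < N := Nat.cast_pos.mpr hN
  have h1 : (i : ℝ) ≤ u * N := by
    have := hu.1
    rw [div_le_iff₀ hNpos] at this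
    linarith
  have h2 : u * N < (i : ℝ) + 1 := by
    have := hu.2
    rw [lt_div_iff₀ hNpos] at this
    linarith
  have h0 : (0 : ℝ) ≤ u * N := le_trans (by positivity) h1
  have hfl : ⌊u * (N : ℝ)⌋₊ = (i : ℕ) := by
    rw [Nat.floor_eq_iff h0]
    exact ⟨h1, by exact_mod_cast h2⟩
  have : stepIdx N u = (i : ℕ) := by
    rw [stepIdx, hfl]
    exact min_eq_left (Nat.le_sub_one_of_lt i.isLt)
  exact Fin.ext this

lemma stepW_eq {N : ℕ} (hN : 0 < N) (w : Fin N → Fin N → ℝ) (u v : ℝ) :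
    stepW N w u v = w (finIdx N hN u) (finIdx N hN v) := by
  rw [stepW, stepOf_eq _ hN, stepOf_eq _ hN]

/-- The integral over `[0,1]` of a step function equals the average. -/
lemma step_avg {N : ℕ} (hN : 0 < N) (g : Fin N → ℝ) :
    (∫ v in Icc (0 : ℝ) 1, stepOf 0 N g v) = (∑ j, g j) / N := by
  have hNpos : (0 : ℝ) < N := Nat.cast_pos.mpr hN
  have hpiece : ∀ i : Fin N, ∀ v ∈ Ico ((i : ℝ) / N) (((i : ℝ) + 1) / N),
      stepOf 0 N g v = g i := by
    intro i v hv
    rw [stepOf_eq _ hN, finIdx_eq hN i hv]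
  -- decomposition of [0,1)
  have hdecomp : Ico (0 : ℝ) 1 = ⋃ i ∈ (Finset.univ : Finset (Fin N)),
      Ico ((i : ℝ) / N) (((i : ℝ) + 1) / N) := by
    ext u
    simp only [mem_Ico, Set.mem_iUnion, Finset.mem_univ, exists_true_left, exists_prop,
      true_and]
    constructor
    · rintro ⟨h0, h1⟩
      have hun : 0 ≤ u * N := by positivity
      have hlt : u * (N : ℝ) < N := by nlinarith
      have hflt : ⌊u * (N : ℝ)⌋₊ < N := by
        rw [Nat.floor_lt hun]; exact_mod_cast hlt
      refine ⟨⟨⌊u * (N : ℝ)⌋₊, hflt⟩, ?_, ?_⟩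
      · show ((⌊u * (N : ℝ)⌋₊ : ℝ)) / N ≤ u
        rw [div_le_iff₀ hNpos]
        exact Nat.floor_le hun
      · show u < ((⌊u * (N : ℝ)⌋₊ : ℝ) + 1) / N
        rw [lt_div_iff₀ hNpos]
        exact Nat.lt_floor_add_one (u * (N : ℝ))
    · rintro ⟨i, hi1, hi2⟩
      constructor
      · exact le_trans (by positivity) hi1
      · have : ((i : ℝ) + 1) / N ≤ 1 := by
          rw [div_le_one hNpos]
          have := i.isLt
          exact_mod_cast Nat.succ_le_of_lt this
        linarith
  have hmeas : ∀ i ∈ (Finset.univ : Finset (Fin N)),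
      MeasurableSet (Ico ((i : ℝ) / N) (((i : ℝ) + 1) / N)) := fun i _ => measurableSet_Ico
  have hint : ∀ i ∈ (Finset.univ : Finset (Fin N)),
      IntegrableOn (stepOf 0 N g) (Ico ((i : ℝ) / N) (((i : ℝ) + 1) / N)) volume := by
    intro i _
    rw [integrableOn_congr_fun (hpiece i) measurableSet_Ico]
    exact (integrableOn_const_iff).mpr (Or.inr (by rw [Real.volume_Ico]; exact ENNReal.ofReal_lt_top))
  have hdisj0 : ∀ i j : Fin N, (i : ℕ) < (j : ℕ) →
      Disjoint (Ico ((i : ℝ) / N) (((i : ℝ) + 1) / N))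
        (Ico ((j : ℝ) / N) (((j : ℝ) + 1) / N)) := by
    intro i j hij
    rw [Set.Ico_disjoint_Ico]
    have h1 : ((i : ℝ) + 1) ≤ (j : ℝ) := by exact_mod_cast hij
    calc min (((i : ℝ) + 1) / N) (((j : ℝ) + 1) / N) ≤ ((i : ℝ) + 1) / N := min_le_left _ _
      _ ≤ (j : ℝ) / N := by gcongr
      _ ≤ max ((i : ℝ) / N) ((j : ℝ) / N) := le_max_right _ _
  have hdisj : Set.Pairwise (↑(Finset.univ : Finset (Fin N)))
      (Function.onFun Disjoint fun i : Fin N => Ico ((i : ℝ) / N) (((i : ℝ) + 1) / N)) := by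
    intro i _ j _ hij
    rcases lt_or_gt_of_ne (fun h : (i : ℕ) = (j : ℕ) => hij (Fin.ext h)) with h | h
    · exact hdisj0 i j h
    · exact (hdisj0 j i h).symm
  have hval : ∀ i : Fin N,
      (∫ v in Ico ((i : ℝ) / N) (((i : ℝ) + 1) / N), stepOf 0 N g v) = g i / N := by
    intro i
    rw [setIntegral_congr_fun measurableSet_Ico (hpiece i), setIntegral_const,
      measureReal_def, Real.volume_Ico]
    have h1 : ((i : ℝ) + 1) / N - (i : ℝ) / N = 1 / N := by ring
    rw [h1, ENNReal.toReal_ofReal (by positivity)]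
    rw [smul_eq_mul]; ring
  rw [← setIntegral_congr_set (Ico_ae_eq_Icc (a := (0:ℝ)) (b := (1:ℝ))), hdecomp,
    integral_biUnion_finset Finset.univ hmeas hdisj hint, Finset.sum_congr rfl
      (fun i _ => hval i), ← Finset.sum_div]

/-- Product of two `L²` functions is integrable. -/
lemma l2_mul_integrable {X : Type*} [MeasurableSpace X] {μ : Measure X} {f g : X → ℝ}
    (hfm : AEStronglyMeasurable f μ) (hgm : AEStronglyMeasurable g μ)
    (hf : Integrable (fun x => f x ^ 2) μ) (hg : Integrable (fun x => g x ^ 2) μ) :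
    Integrable (fun x => f x * g x) μ := by
  have hmaj : Integrable (fun x => (f x ^ 2 + g x ^ 2) / 2) μ := (hf.add hg).div_const 2
  refine Integrable.mono' hmaj (hfm.mul hgm) ?_
  filter_upwards with x
  rw [Real.norm_eq_abs, abs_mul]
  nlinarith [sq_nonneg (|f x| - |g x|), sq_abs (f x), sq_abs (g x), abs_nonneg (f x),
    abs_nonneg (g x)]

/-- Cauchy–Schwarz inequality for integrals. -/
lemma integral_sq_le_mul {X : Type*} [MeasurableSpace X] {μ : Measure X} {f g : X → ℝ}
    (hfm : AEStronglyMeasurable f μ) (hgm : AEStronglyMeasurable g μ)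
    (hf : Integrable (fun x => f x ^ 2) μ) (hg : Integrable (fun x => g x ^ 2) μ) :
    (∫ x, f x * g x ∂μ) ^ 2 ≤ (∫ x, f x ^ 2 ∂μ) * ∫ x, g x ^ 2 ∂μ := by
  have hfg := l2_mul_integrable hfm hgm hf hg
  set X' := ∫ x, f x ^ 2 ∂μ with hX'
  set Y := ∫ x, g x ^ 2 ∂μ with hY
  set Pp := ∫ x, f x * g x ∂μ with hPp
  have key : ∀ θ : ℝ, 0 ≤ X' * (θ * θ) + (2 * Pp) * θ + Y := by
    intro θ
    have h1 : 0 ≤ ∫ x, (θ * f x + g x) ^ 2 ∂μ := integral_nonneg fun x => sq_nonneg _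
    have h2 : (∫ x, (θ * f x + g x) ^ 2 ∂μ) = θ ^ 2 * X' + 2 * θ * Pp + Y := by
      have he : (fun x => (θ * f x + g x) ^ 2)
          = fun x => (θ ^ 2 * f x ^ 2 + (2 * θ) * (f x * g x)) + g x ^ 2 := by
        funext x; ring
      have i1 : Integrable (fun x => θ ^ 2 * f x ^ 2) μ := hf.const_mul _
      have i2 : Integrable (fun x => (2 * θ) * (f x * g x)) μ := hfg.const_mul _
      have i12 : Integrable (fun x => θ ^ 2 * f x ^ 2 + (2 * θ) * (f x * g x)) μ := i1.add i2
      rw [he, integral_add i12 hg, integral_add i1 i2, integral_const_mul,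
        integral_const_mul]
    nlinarith [h1, h2]
  have hd := discrim_le_zero key
  rw [discrim] at hd
  nlinarith [hd]

/-- A progressively measurable process is jointly measurable. -/
lemma progMeasurable_uncurry {mΩ : MeasurableSpace Ω} {F : Filtration ℝ mΩ}
    {f : ℝ → Ω → ℝ} (hf : ProgMeasurable F f) :
    Measurable fun p : ℝ × Ω => f p.1 p.2 := by
  intro s hs
  have hcover : (fun p : ℝ × Ω => f p.1 p.2) ⁻¹' s
      = ⋃ n : ℕ, ((fun p : ℝ × Ω => f p.1 p.2) ⁻¹' s ∩ Iic (n : ℝ) ×ˢ univ) := by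
    ext p
    simp only [Set.mem_iUnion, Set.mem_inter_iff, Set.mem_preimage, mem_prod, mem_Iic,
      mem_univ, and_true]
    constructor
    · intro hp
      obtain ⟨n, hn⟩ := exists_nat_ge p.1
      exact ⟨n, hp, hn⟩
    · rintro ⟨n, hp, _⟩; exact hp
  rw [hcover]
  refine MeasurableSet.iUnion fun n => ?_
  set e : Iic (n : ℝ) × Ω → ℝ × Ω := Prod.map (Subtype.val) id with he
  have hemb : MeasurableEmbedding e :=
    (MeasurableEmbedding.subtype_coe measurableSet_Iic).prodMap MeasurableEmbedding.id
  have hA : MeasurableSet ((fun q : Iic (n : ℝ) × Ω => f q.1 q.2) ⁻¹' s) := by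
    have hm : Measurable[Subtype.instMeasurableSpace.prod (F n)]
        fun q : Iic (n : ℝ) × Ω => f q.1 q.2 := (hf n).measurable
    have hle : (Subtype.instMeasurableSpace.prod (F n) :
        MeasurableSpace (Iic (n : ℝ) × Ω)) ≤ Prod.instMeasurableSpace := by
      refine sup_le_sup le_rfl (MeasurableSpace.comap_mono (F.le n))
    exact (hm.mono hle le_rfl) hs
  have himg : e '' ((fun q : Iic (n : ℝ) × Ω => f q.1 q.2) ⁻¹' s)
      = (fun p : ℝ × Ω => f p.1 p.2) ⁻¹' s ∩ Iic (n : ℝ) ×ˢ univ := by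
    ext p
    constructor
    · rintro ⟨⟨t, ω⟩, hq, rfl⟩
      exact ⟨hq, t.2, trivial⟩
    · rintro ⟨hp, hp1, -⟩
      exact ⟨(⟨p.1, hp1⟩, p.2), hp, rfl⟩
  rw [← himg]
  exact hemb.measurableSet_image.mpr hA

section Kernel

variable {T : ℝ} {K : ℝ → ℝ → ℝ} {f : ℝ → ℝ}

lemma IsL2Kernel.swapK (hK : IsL2Kernel T K) : IsL2Kernel T (Function.swap K) := by
  refine ⟨hK.1.comp measurable_swap, ?_⟩
  exact hK.2.swap

lemma opKadj_eq (T : ℝ) (K : ℝ → ℝ → ℝ) (f : ℝ → ℝ) :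
    opKadj T K f = opK T (Function.swap K) f := rfl

lemma opK_meas (hKm : Measurable (Function.uncurry K)) (hfm : Measurable f) :
    StronglyMeasurable (opK T K f) := by
  have h : Measurable fun p : ℝ × ℝ => K p.1 p.2 * f p.2 :=
    hKm.mul (hfm.comp measurable_snd)
  exact h.stronglyMeasurable.integral_prod_right'

lemma opK_sq_integrable (hK : IsL2Kernel T K) (hfm : Measurable f)
    (hf : Integrable (fun s => f s ^ 2) (volume.restrict (Icc (0:ℝ) T))) :
    Integrable (fun t => opK T K f t ^ 2) (volume.restrict (Icc (0:ℝ) T)) := by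
  have hmarg : Integrable (fun t => ∫ s in Icc (0:ℝ) T, K t s ^ 2)
      (volume.restrict (Icc (0:ℝ) T)) := hK.2.integral_prod_left
  refine Integrable.mono' (hmarg.mul_const (∫ s in Icc (0:ℝ) T, f s ^ 2))
    ((opK_meas hK.1 hfm).measurable.pow_const 2).aestronglyMeasurable ?_
  filter_upwards [hK.2.prod_right_ae] with t ht
  have hsec : AEStronglyMeasurable (fun s => K t s) (volume.restrict (Icc (0:ℝ) T)) :=
    (hK.1.comp measurable_prodMk_left).aestronglyMeasurable
  have hcs := integral_sq_le_mul hsec hfm.aestronglyMeasurable ht hf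
  rw [Real.norm_eq_abs, abs_of_nonneg (sq_nonneg _)]
  exact hcs

lemma opK_section_integrable (hK : IsL2Kernel T K) (hfm : Measurable f)
    (hf : Integrable (fun s => f s ^ 2) (volume.restrict (Icc (0:ℝ) T))) :
    ∀ᵐ t ∂(volume.restrict (Icc (0:ℝ) T)),
      Integrable (fun s => K t s * f s) (volume.restrict (Icc (0:ℝ) T)) := by
  filter_upwards [hK.2.prod_right_ae] with t ht
  exact l2_mul_integrable (hK.1.comp measurable_prodMk_left).aestronglyMeasurable
    hfm.aestronglyMeasurable ht hf

lemma opK_sum {N : ℕ} (hK : IsL2Kernel T K) (c : Fin N → ℝ) (g : Fin N → ℝ → ℝ)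
    (hgm : ∀ j, Measurable (g j))
    (hg : ∀ j, Integrable (fun s => g j s ^ 2) (volume.restrict (Icc (0:ℝ) T))) :
    ∀ᵐ t ∂(volume.restrict (Icc (0:ℝ) T)),
      opK T K (fun s => ∑ j, c j * g j s) t = ∑ j, c j * opK T K (g j) t := by
  have h : ∀ᵐ t ∂(volume.restrict (Icc (0:ℝ) T)), ∀ j,
      Integrable (fun s => K t s * g j s) (volume.restrict (Icc (0:ℝ) T)) := by
    rw [MeasureTheory.ae_all_iff]
    exact fun j => opK_section_integrable hK (hgm j) (hg j)
  filter_upwards [h] with t ht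
  have he : (fun s => K t s * ∑ j, c j * g j s)
      = fun s => ∑ j, c j * (K t s * g j s) := by
    funext s; rw [Finset.mul_sum]; exact Finset.sum_congr rfl fun j _ => by ring
  show (∫ s in Icc (0:ℝ) T, K t s * ∑ j, c j * g j s) = _
  rw [he, integral_finset_sum _ fun j _ => (ht j).const_mul (c j)]
  exact Finset.sum_congr rfl fun j _ => integral_const_mul _ _

lemma ip_mul_sum {N : ℕ} (f : ℝ → ℝ) (c : Fin N → ℝ) (g : Fin N → ℝ → ℝ)
    (hint : ∀ j, Integrable (fun t => f t * g j t) (volume.restrict (Icc (0:ℝ) T))) :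
    ip T f (fun t => ∑ j, c j * g j t) = ∑ j, c j * ip T f (g j) := by
  show (∫ t in Icc (0:ℝ) T, f t * ∑ j, c j * g j t) = _
  have he : (fun t => f t * ∑ j, c j * g j t) = fun t => ∑ j, c j * (f t * g j t) := by
    funext t; rw [Finset.mul_sum]; exact Finset.sum_congr rfl fun j _ => by ring
  rw [he, integral_finset_sum _ fun j _ => (hint j).const_mul (c j)]
  exact Finset.sum_congr rfl fun j _ => integral_const_mul _ _

end Kernel

section MainEq

variable {mΩ : MeasurableSpace Ω}

/-- Key identity: the graphon objective of a step profile (possibly deviated at the single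
label `u`) coincides with the `N`-player objective of player `finIdx u` (with the
corresponding deviation). -/
lemma Jgr_eq_Jgraph {P : Measure Ω} [IsProbabilityMeasure P] {F : Filtration ℝ mΩ}
    {T : ℝ} {N : ℕ} (hN : 0 < N)
    {Atil Btil Ctil : ℝ → ℝ → ℝ}
    (hB : IsL2Kernel T Btil) (hC : IsL2Kernel T Ctil)
    (lam : ℝ) {w : Fin N → Fin N → ℝ} (hwdiag : ∀ i, w i i = 0)
    (b : Fin N → ℝ → Ω → ℝ)
    {bstar : ℝ → Ω → ℝ} (hbstar : ProgMeasurable F bstar ∧ SqInt T P bstar)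
    (c : Fin N → Ω → ℝ)
    {γ : Fin N → ℝ → Ω → ℝ} (hγ : ∀ j, Admissible T F P (γ j))
    {β : ℝ → Ω → ℝ} (hβ : Admissible T F P β) (u : ℝ) :
    Jgr T P Atil Btil Ctil lam (stepW N w) (stepOf (fun _ _ => (0:ℝ)) N b) bstar
        (stepOf (fun _ => (0:ℝ)) N c) u
        (Function.update (stepOf (fun _ _ => (0:ℝ)) N γ) u β)
      = Jgraph T P Atil Btil Ctil lam w b bstar c (finIdx N hN u)
        (Function.update γ (finIdx N hN u) β) := by
  set i := finIdx N hN u with hi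
  have hγm : ∀ j, Measurable fun p : ℝ × Ω => γ j p.1 p.2 :=
    fun j => progMeasurable_uncurry (hγ j).1
  have hβm : Measurable fun p : ℝ × Ω => β p.1 p.2 := progMeasurable_uncurry hβ.1
  have hbsm : Measurable fun p : ℝ × Ω => bstar p.1 p.2 := progMeasurable_uncurry hbstar.1
  have hγsec : ∀ j (ω : Ω), Measurable fun t => γ j t ω :=
    fun j ω => (hγm j).comp (measurable_prodMk_right)
  have hβsec : ∀ ω : Ω, Measurable fun t => β t ω :=
    fun ω => hβm.comp (measurable_prodMk_right)
  have hbssec : ∀ ω : Ω, Measurable fun t => bstar t ω :=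
    fun ω => hbsm.comp (measurable_prodMk_right)
  have hgood : ∀ᵐ ω ∂P, (∀ j, Integrable (fun t => γ j t ω ^ 2)
        (volume.restrict (Icc (0:ℝ) T)))
      ∧ Integrable (fun t => β t ω ^ 2) (volume.restrict (Icc (0:ℝ) T))
      ∧ Integrable (fun t => bstar t ω ^ 2) (volume.restrict (Icc (0:ℝ) T)) := by
    refine Filter.Eventually.and ?_ (Filter.Eventually.and ?_ ?_)
    · exact ae_all_iff.mpr fun j => (hγ j).2.prod_left_ae
    · exact hβ.2.prod_left_ae
    · exact hbstar.2.prod_left_ae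
  simp only [Jgr, Jgraph]
  apply integral_congr_ae
  filter_upwards [hgood] with ω hω
  obtain ⟨hγω, hβω, hbsω⟩ := hω
  -- the graphon average of the (deviated) step profile
  have hW : ∀ s : ℝ, (∫ v in Icc (0:ℝ) 1,
        stepW N w u v * Function.update (stepOf (fun _ _ => (0:ℝ)) N γ) u β v s ω)
      = ∑ j, w i j / (N:ℝ) * γ j s ω := by
    intro s
    have hne : ∀ᵐ v ∂(volume.restrict (Icc (0:ℝ) 1)), v ≠ u := by
      refine ae_restrict_of_ae ?_
      rw [ae_iff]
      have h1 : {v : ℝ | ¬v ≠ u} = {u} := by ext v; simp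
      rw [h1]; exact Real.volume_singleton
    have hcong : (fun v => stepW N w u v *
          Function.update (stepOf (fun _ _ => (0:ℝ)) N γ) u β v s ω)
        =ᵐ[volume.restrict (Icc (0:ℝ) 1)]
          fun v => stepOf 0 N (fun j => w i j * γ j s ω) v := by
      filter_upwards [hne] with v hv
      rw [Function.update_of_ne hv, stepW_eq hN, stepOf_eq _ hN,
        stepOf_eq _ hN (fun j => w i j * γ j s ω) v]
    rw [integral_congr_ae hcong, step_avg hN, Finset.sum_div]
    exact Finset.sum_congr rfl fun j _ => (mul_div_right_comm _ _ _)
  have hWf : (fun s => ∫ v in Icc (0:ℝ) 1,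
        stepW N w u v * Function.update (stepOf (fun _ _ => (0:ℝ)) N γ) u β v s ω)
      = fun s => ∑ j, w i j / (N:ℝ) * γ j s ω := funext hW
  -- integrability facts at the fixed ω
  have hopKBsq : ∀ j, Integrable (fun t => opK T Btil (fun s => γ j s ω) t ^ 2)
      (volume.restrict (Icc (0:ℝ) T)) :=
    fun j => opK_sq_integrable hB (hγsec j ω) (hγω j)
  have hopKBasq : ∀ j, Integrable (fun t => opKadj T Btil (fun s => γ j s ω) t ^ 2)
      (volume.restrict (Icc (0:ℝ) T)) := by
    intro j
    rw [opKadj_eq]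
    exact opK_sq_integrable hB.swapK (hγsec j ω) (hγω j)
  have hopKCsq : ∀ k, Integrable (fun t => opK T Ctil (fun s => γ k s ω) t ^ 2)
      (volume.restrict (Icc (0:ℝ) T)) :=
    fun k => opK_sq_integrable hC (hγsec k ω) (hγω k)
  have hintB : ∀ j, Integrable (fun t => β t ω *
      (opK T Btil (fun s => γ j s ω) t + opKadj T Btil (fun s => γ j s ω) t))
      (volume.restrict (Icc (0:ℝ) T)) := by
    intro j
    have h1 : Integrable (fun t => β t ω * opK T Btil (fun s => γ j s ω) t)
        (volume.restrict (Icc (0:ℝ) T)) :=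
      l2_mul_integrable (hβsec ω).aestronglyMeasurable
        (opK_meas hB.1 (hγsec j ω)).aestronglyMeasurable hβω (hopKBsq j)
    have h2 : Integrable (fun t => β t ω * opKadj T Btil (fun s => γ j s ω) t)
        (volume.restrict (Icc (0:ℝ) T)) := by
      rw [opKadj_eq]
      exact l2_mul_integrable (hβsec ω).aestronglyMeasurable
        (opK_meas hB.swapK.1 (hγsec j ω)).aestronglyMeasurable hβω
        (by have hx := hopKBasq j; rwa [opKadj_eq] at hx)
    have h12 : Integrable (fun t => β t ω * opK T Btil (fun s => γ j s ω) t
        + β t ω * opKadj T Btil (fun s => γ j s ω) t)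
        (volume.restrict (Icc (0:ℝ) T)) := h1.add h2
    exact h12.congr (ae_of_all _ fun t => by ring)
  have hintC : ∀ j k, Integrable (fun t => γ j t ω * opK T Ctil (fun s => γ k s ω) t)
      (volume.restrict (Icc (0:ℝ) T)) :=
    fun j k => l2_mul_integrable (hγsec j ω).aestronglyMeasurable
      (opK_meas hC.1 (hγsec k ω)).aestronglyMeasurable (hγω j) (hopKCsq k)
  have hintbs : ∀ j, Integrable (fun t => bstar t ω * γ j t ω)
      (volume.restrict (Icc (0:ℝ) T)) :=
    fun j => l2_mul_integrable (hbssec ω).aestronglyMeasurable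
      (hγsec j ω).aestronglyMeasurable hbsω (hγω j)
  -- sum identities for the kernel operators
  have hsum1 : ∀ᵐ t ∂(volume.restrict (Icc (0:ℝ) T)),
      opK T Btil (fun s => ∑ j, w i j / (N:ℝ) * γ j s ω) t
        = ∑ j, w i j / (N:ℝ) * opK T Btil (fun s => γ j s ω) t :=
    opK_sum hB (fun j => w i j / (N:ℝ)) (fun j s => γ j s ω) (fun j => hγsec j ω) hγω
  have hsum2 : ∀ᵐ t ∂(volume.restrict (Icc (0:ℝ) T)),
      opKadj T Btil (fun s => ∑ j, w i j / (N:ℝ) * γ j s ω) t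
        = ∑ j, w i j / (N:ℝ) * opKadj T Btil (fun s => γ j s ω) t := by
    simp only [opKadj_eq]
    exact opK_sum hB.swapK (fun j => w i j / (N:ℝ)) (fun j s => γ j s ω)
      (fun j => hγsec j ω) hγω
  have hsum3 : ∀ᵐ t ∂(volume.restrict (Icc (0:ℝ) T)),
      opK T Ctil (fun s => ∑ j, w i j / (N:ℝ) * γ j s ω) t
        = ∑ j, w i j / (N:ℝ) * opK T Ctil (fun s => γ j s ω) t :=
    opK_sum hC (fun j => w i j / (N:ℝ)) (fun j s => γ j s ω) (fun j => hγsec j ω) hγω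
  -- the three interaction-term identities
  have E2 : ip T (fun t => β t ω)
        (fun t => opK T Btil (fun s => ∑ j, w i j / (N:ℝ) * γ j s ω) t
          + opKadj T Btil (fun s => ∑ j, w i j / (N:ℝ) * γ j s ω) t)
      = 1 / (N:ℝ) * ∑ j, w i j * ip T (fun t => β t ω)
          (fun t => opK T Btil (fun s => Function.update γ i β j s ω) t
            + opKadj T Btil (fun s => Function.update γ i β j s ω) t) := by
    have hae : (fun t => β t ω *
          (opK T Btil (fun s => ∑ j, w i j / (N:ℝ) * γ j s ω) t
            + opKadj T Btil (fun s => ∑ j, w i j / (N:ℝ) * γ j s ω) t))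
        =ᵐ[volume.restrict (Icc (0:ℝ) T)]
          fun t => ∑ j, w i j / (N:ℝ) * (β t ω *
            (opK T Btil (fun s => γ j s ω) t + opKadj T Btil (fun s => γ j s ω) t)) := by
      filter_upwards [hsum1, hsum2] with t h1 h2
      rw [h1, h2, ← Finset.sum_add_distrib, Finset.mul_sum]
      exact Finset.sum_congr rfl fun j _ => by ring
    have step1 : ip T (fun t => β t ω)
          (fun t => opK T Btil (fun s => ∑ j, w i j / (N:ℝ) * γ j s ω) t
            + opKadj T Btil (fun s => ∑ j, w i j / (N:ℝ) * γ j s ω) t)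
        = ∑ j, w i j / (N:ℝ) * ∫ t in Icc (0:ℝ) T, β t ω *
            (opK T Btil (fun s => γ j s ω) t + opKadj T Btil (fun s => γ j s ω) t) := by
      show (∫ t in Icc (0:ℝ) T, β t ω *
          (opK T Btil (fun s => ∑ j, w i j / (N:ℝ) * γ j s ω) t
            + opKadj T Btil (fun s => ∑ j, w i j / (N:ℝ) * γ j s ω) t)) = _
      rw [integral_congr_ae hae,
        integral_finset_sum _ fun j _ => ((hintB j).const_mul _)]
      exact Finset.sum_congr rfl fun j _ => integral_const_mul _ _
    rw [step1, Finset.mul_sum]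
    refine Finset.sum_congr rfl fun j _ => ?_
    by_cases hj : j = i
    · subst hj; rw [hwdiag]; simp
    · rw [Function.update_of_ne hj]
      show w i j / (N:ℝ) * ∫ t in Icc (0:ℝ) T, β t ω *
          (opK T Btil (fun s => γ j s ω) t + opKadj T Btil (fun s => γ j s ω) t) = _
      rw [show ip T (fun t => β t ω)
          (fun t => opK T Btil (fun s => γ j s ω) t
            + opKadj T Btil (fun s => γ j s ω) t)
          = ∫ t in Icc (0:ℝ) T, β t ω *
            (opK T Btil (fun s => γ j s ω) t + opKadj T Btil (fun s => γ j s ω) t) from rfl]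
      ring
  have E3 : ip T (fun t => ∑ j, w i j / (N:ℝ) * γ j t ω)
        (opK T Ctil (fun s => ∑ j, w i j / (N:ℝ) * γ j s ω))
      = 1 / (N:ℝ) ^ 2 * ∑ j, ∑ k, w i j * w i k *
          ip T (fun t => Function.update γ i β j t ω)
            (opK T Ctil (fun s => Function.update γ i β k s ω)) := by
    have hae : (fun t => (∑ j, w i j / (N:ℝ) * γ j t ω) *
          opK T Ctil (fun s => ∑ j, w i j / (N:ℝ) * γ j s ω) t)
        =ᵐ[volume.restrict (Icc (0:ℝ) T)]
          fun t => ∑ j, ∑ k, (w i j / (N:ℝ)) * (w i k / (N:ℝ)) *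
            (γ j t ω * opK T Ctil (fun s => γ k s ω) t) := by
      filter_upwards [hsum3] with t h3
      rw [h3, Finset.sum_mul_sum]
      exact Finset.sum_congr rfl fun j _ => Finset.sum_congr rfl fun k _ => by ring
    have step1 : ip T (fun t => ∑ j, w i j / (N:ℝ) * γ j t ω)
          (opK T Ctil (fun s => ∑ j, w i j / (N:ℝ) * γ j s ω))
        = ∑ j, ∑ k, (w i j / (N:ℝ)) * (w i k / (N:ℝ)) *
            ∫ t in Icc (0:ℝ) T, γ j t ω * opK T Ctil (fun s => γ k s ω) t := by
      show (∫ t in Icc (0:ℝ) T, (∑ j, w i j / (N:ℝ) * γ j t ω) *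
          opK T Ctil (fun s => ∑ j, w i j / (N:ℝ) * γ j s ω) t) = _
      rw [integral_congr_ae hae, integral_finset_sum _ fun j _ =>
        integrable_finset_sum _ fun k _ => ((hintC j k).const_mul _)]
      refine Finset.sum_congr rfl fun j _ => ?_
      rw [integral_finset_sum _ fun k _ => ((hintC j k).const_mul _)]
      exact Finset.sum_congr rfl fun k _ => integral_const_mul _ _
    rw [step1, Finset.mul_sum]
    refine Finset.sum_congr rfl fun j _ => ?_
    rw [Finset.mul_sum]
    refine Finset.sum_congr rfl fun k _ => ?_
    by_cases hj : j = i
    · subst hj; rw [hwdiag]; simp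
    · by_cases hk : k = i
      · subst hk; rw [hwdiag]; simp
      · rw [Function.update_of_ne hj, Function.update_of_ne hk]
        rw [show ip T (fun t => γ j t ω) (opK T Ctil (fun s => γ k s ω))
            = ∫ t in Icc (0:ℝ) T, γ j t ω * opK T Ctil (fun s => γ k s ω) t from rfl]
        ring
  have E5 : ip T (fun t => bstar t ω) (fun t => ∑ j, w i j / (N:ℝ) * γ j t ω)
      = 1 / (N:ℝ) * ∑ j, w i j *
          ip T (fun t => bstar t ω) (fun t => Function.update γ i β j t ω) := by
    have step1 : ip T (fun t => bstar t ω) (fun t => ∑ j, w i j / (N:ℝ) * γ j t ω)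
        = ∑ j, w i j / (N:ℝ) * ip T (fun t => bstar t ω) (fun t => γ j t ω) :=
      ip_mul_sum _ _ _ hintbs
    rw [step1, Finset.mul_sum]
    refine Finset.sum_congr rfl fun j _ => ?_
    by_cases hj : j = i
    · subst hj; rw [hwdiag]; simp
    · rw [Function.update_of_ne hj]; ring
  simp only [Function.update_self]
  rw [hWf, E2, E3, E5, stepOf_eq _ hN b u, stepOf_eq _ hN c u, ← hi]

/-- Value of the graphon objective at an *undeviated* step profile. -/
lemma Jgr_step_eq {P : Measure Ω} [IsProbabilityMeasure P] {F : Filtration ℝ mΩ}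
    {T : ℝ} {N : ℕ} (hN : 0 < N)
    {Atil Btil Ctil : ℝ → ℝ → ℝ}
    (hB : IsL2Kernel T Btil) (hC : IsL2Kernel T Ctil)
    (lam : ℝ) {w : Fin N → Fin N → ℝ} (hwdiag : ∀ i, w i i = 0)
    (b : Fin N → ℝ → Ω → ℝ)
    {bstar : ℝ → Ω → ℝ} (hbstar : ProgMeasurable F bstar ∧ SqInt T P bstar)
    (c : Fin N → Ω → ℝ)
    {γ : Fin N → ℝ → Ω → ℝ} (hγ : ∀ j, Admissible T F P (γ j)) (u : ℝ) :
    Jgr T P Atil Btil Ctil lam (stepW N w) (stepOf (fun _ _ => (0:ℝ)) N b) bstar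
        (stepOf (fun _ => (0:ℝ)) N c) u (stepOf (fun _ _ => (0:ℝ)) N γ)
      = Jgraph T P Atil Btil Ctil lam w b bstar c (finIdx N hN u) γ := by
  have e := Jgr_eq_Jgraph (Atil := Atil) hN hB hC lam hwdiag b hbstar c hγ
    (hγ (finIdx N hN u)) u
  rw [Function.update_eq_self] at e
  rw [← stepOf_eq (fun _ _ => (0:ℝ)) hN γ u] at e
  rw [Function.update_eq_self] at e
  exact e

/-- The step profile of an admissible tuple is an admissible graphon profile. -/
lemma step_admProfile {P : Measure Ω} [IsProbabilityMeasure P] {F : Filtration ℝ mΩ}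
    {T : ℝ} {N : ℕ} (hN : 0 < N) {α : Fin N → ℝ → Ω → ℝ}
    (hadm : ∀ i, Admissible T F P (α i)) :
    AdmProfile T F P (stepOf (fun _ _ => (0:ℝ)) N α) := by
  have hm : ∀ j, Measurable fun p : ℝ × Ω => α j p.1 p.2 :=
    fun j => progMeasurable_uncurry (hadm j).1
  have hjoint : Measurable fun q : ℝ × ℝ × Ω =>
      stepOf (fun _ _ => (0:ℝ)) N α q.1 q.2.1 q.2.2 := by
    have h1 : Measurable fun q : ℝ × ℝ × Ω => ((q.2.1, q.2.2), ⌊q.1 * (N:ℝ)⌋₊) := by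
      refine Measurable.prodMk (Measurable.prodMk ?_ ?_) ?_
      · exact measurable_snd.fst
      · exact measurable_snd.snd
      · exact Nat.measurable_floor.comp (measurable_fst.mul_const _)
    have h2 : Measurable fun q : (ℝ × Ω) × ℕ =>
        (if h : min q.2 (N - 1) < N then α ⟨min q.2 (N - 1), h⟩ else fun _ _ => (0:ℝ))
          q.1.1 q.1.2 := by
      refine measurable_from_prod_countable_left fun n => ?_
      by_cases h : min n (N - 1) < N
      · simp only [dif_pos h]
        exact hm ⟨min n (N - 1), h⟩
      · simp only [dif_neg h]
        exact measurable_const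
    exact h2.comp h1
  refine ⟨hjoint, ?_, ?_, ?_⟩
  · intro u _
    rw [stepOf_eq _ hN α u]
    exact (hadm _).1
  · refine ae_of_all _ fun u => ?_
    rw [stepOf_eq _ hN α u]
    exact (hadm _).2
  · have hASM : AEStronglyMeasurable
        (fun q : ℝ × ℝ × Ω => stepOf (fun _ _ => (0:ℝ)) N α q.1 q.2.1 q.2.2 ^ 2)
        ((volume.restrict (Icc (0:ℝ) 1)).prod ((volume.restrict (Icc (0:ℝ) T)).prod P)) :=
      (hjoint.pow_const 2).aestronglyMeasurable
    rw [integrable_prod_iff hASM]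
    constructor
    · refine ae_of_all _ fun u => ?_
      have : (fun p : ℝ × Ω => stepOf (fun _ _ => (0:ℝ)) N α u p.1 p.2 ^ 2)
          = fun p : ℝ × Ω => α (finIdx N hN u) p.1 p.2 ^ 2 := by
        rw [stepOf_eq _ hN α u]
      rw [this]
      exact (hadm _).2
    · have hrw : (fun u => ∫ p, ‖stepOf (fun _ _ => (0:ℝ)) N α u p.1 p.2 ^ 2‖
            ∂((volume.restrict (Icc (0:ℝ) T)).prod P))
          = stepOf 0 N fun i => ∫ p, ‖α i p.1 p.2 ^ 2‖
            ∂((volume.restrict (Icc (0:ℝ) T)).prod P) := by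
        funext u
        rw [stepOf_eq _ hN α u, stepOf_eq (0:ℝ) hN _ u]
      rw [hrw]
      have hmeas : Measurable (stepOf (0:ℝ) N fun i => ∫ p, ‖α i p.1 p.2 ^ 2‖
          ∂((volume.restrict (Icc (0:ℝ) T)).prod P)) := by
        set g : Fin N → ℝ := fun i => ∫ p, ‖α i p.1 p.2 ^ 2‖
          ∂((volume.restrict (Icc (0:ℝ) T)).prod P) with hg
        have h : stepOf (0:ℝ) N g
            = (fun n : ℕ => if h : min n (N - 1) < N then g ⟨min n (N - 1), h⟩ else 0)
              ∘ fun u : ℝ => ⌊u * (N:ℝ)⌋₊ := rfl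
        rw [h]
        exact measurable_from_top.comp (Nat.measurable_floor.comp
          (measurable_id.mul_const _))
      have hfin : IsFiniteMeasure (volume.restrict (Icc (0:ℝ) 1)) := by
        constructor
        rw [Measure.restrict_apply_univ, Real.volume_Icc]
        exact ENNReal.ofReal_lt_top
      refine Integrable.mono' (integrable_const
        (∑ i, |∫ p, ‖α i p.1 p.2 ^ 2‖ ∂((volume.restrict (Icc (0:ℝ) T)).prod P)|))
        hmeas.aestronglyMeasurable (ae_of_all _ fun u => ?_)
      rw [stepOf_eq (0:ℝ) hN _ u, Real.norm_eq_abs]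
      exact Finset.single_le_sum (f := fun i => |∫ p, ‖α i p.1 p.2 ^ 2‖
        ∂((volume.restrict (Icc (0:ℝ) T)).prod P)|) (fun i _ => abs_nonneg _)
        (Finset.mem_univ _)

end MainEq

end Aux

/-- An `N`-tuple of admissible strategies is a Nash equilibrium of
the `N`-player graph game iff its step profile is a Nash equilibrium of the graphon
game with the associated step graphon and step noise. -/
theorem finite_graphon_correspondence
    {Ω : Type} {mΩ : MeasurableSpace Ω} (P : Measure Ω) [IsProbabilityMeasure P]
    (F : Filtration ℝ mΩ) (T : ℝ) (hT : 0 < T) (N : ℕ) (hN : 0 < N)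
    (Atil Btil Ctil : ℝ → ℝ → ℝ)
    (hA : IsVolterraKernel T Atil) (hBk : IsVolterraKernel T Btil)
    (hCk : IsVolterraKernel T Ctil)
    (lam : ℝ) (hlam : 0 < lam)
    (w : Fin N → Fin N → ℝ) (hw01 : ∀ i j, w i j ∈ Icc (0:ℝ) 1)
    (hwsymm : ∀ i j, w i j = w j i) (hwdiag : ∀ i, w i i = 0)
    (b : Fin N → ℝ → Ω → ℝ) (hb : ∀ i, ProgMeasurable F (b i) ∧ SqInt T P (b i))
    (bstar : ℝ → Ω → ℝ) (hbstar : ProgMeasurable F bstar ∧ SqInt T P bstar)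
    (c : Fin N → Ω → ℝ) (hc : ∀ i, Integrable (c i) P ∧ Measurable[F T] (c i))
    (hsup : ∃ Cs : ℝ, ∀ t ∈ Icc (0:ℝ) T,
      (∫ s in Icc (0:ℝ) T, ((Atil t s) ^ 2 + (Btil t s) ^ 2)) ≤ Cs ∧
        (∫ s in Icc (0:ℝ) T, ((Atil s t) ^ 2 + (Btil s t) ^ 2)) ≤ Cs)
    (hApos : ∀ f : ℝ → ℝ, MemL2 T f → 0 ≤ ip T f (opK T Atil f))
    (α : Fin N → ℝ → Ω → ℝ) (hadm : ∀ i, Admissible T F P (α i)) :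
    IsNashGraph T F P Atil Btil Ctil lam w b bstar c α ↔
      IsGraphonNash T F P Atil Btil Ctil lam (stepW N w)
        (stepOf (fun _ _ => (0:ℝ)) N b) bstar (stepOf (fun _ => (0:ℝ)) N c)
        (stepOf (fun _ _ => (0:ℝ)) N α) := by
  constructor
  · rintro ⟨_, hnash⟩
    refine ⟨step_admProfile hN hadm, ?_⟩
    refine ae_of_all _ fun u => ?_
    intro β hβp hβs
    have hβ : Admissible T F P β := ⟨hβp, hβs⟩
    have e1 := Jgr_eq_Jgraph (Atil := Atil) hN hBk.1 hCk.1 lam hwdiag b hbstar c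
      hadm hβ u
    have e2 := Jgr_step_eq (Atil := Atil) hN hBk.1 hCk.1 lam hwdiag b hbstar c hadm u
    rw [e1, e2]
    exact hnash (finIdx N hN u) β hβ
  · rintro ⟨-, hae⟩
    refine ⟨hadm, ?_⟩
    intro i β hβ
    have hNpos : (0:ℝ) < N := Nat.cast_pos.mpr hN
    have hIsub : Ico ((i:ℝ)/N) (((i:ℝ)+1)/N) ⊆ Icc (0:ℝ) 1 := by
      intro v hv
      constructor
      · exact le_trans (by positivity) hv.1
      · have h2 : ((i:ℝ)+1)/N ≤ 1 := by
          rw [div_le_one hNpos]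
          exact_mod_cast Nat.succ_le_of_lt i.isLt
        exact le_of_lt (lt_of_lt_of_le hv.2 h2)
    have hpos : 0 < (volume.restrict (Icc (0:ℝ) 1)) (Ico ((i:ℝ)/N) (((i:ℝ)+1)/N)) := by
      rw [Measure.restrict_apply measurableSet_Ico, Set.inter_eq_left.mpr hIsub,
        Real.volume_Ico]
      have h1 : ((i:ℝ)+1)/N - (i:ℝ)/N = 1/N := by ring
      rw [h1]
      exact ENNReal.ofReal_pos.mpr (by positivity)
    obtain ⟨u, hu1, hu2⟩ : ∃ u, u ∈ Ico ((i:ℝ)/N) (((i:ℝ)+1)/N) ∧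
        ∀ β' : ℝ → Ω → ℝ, ProgMeasurable F β' → SqInt T P β' →
          Jgr T P Atil Btil Ctil lam (stepW N w) (stepOf (fun _ _ => (0:ℝ)) N b) bstar
              (stepOf (fun _ => (0:ℝ)) N c) u
              (Function.update (stepOf (fun _ _ => (0:ℝ)) N α) u β')
            ≤ Jgr T P Atil Btil Ctil lam (stepW N w) (stepOf (fun _ _ => (0:ℝ)) N b)
              bstar (stepOf (fun _ => (0:ℝ)) N c) u (stepOf (fun _ _ => (0:ℝ)) N α) := by
      by_contra hcon
      have h0 := ae_iff.mp hae
      exact hpos.ne' (le_antisymm (le_trans (measure_mono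
        (fun u hu hP => hcon ⟨u, hu, hP⟩)) h0.le) zero_le)
    have hidx : finIdx N hN u = i := finIdx_eq hN i hu1
    have e1 := Jgr_eq_Jgraph (Atil := Atil) hN hBk.1 hCk.1 lam hwdiag b hbstar c
      hadm hβ u
    have e2 := Jgr_step_eq (Atil := Atil) hN hBk.1 hCk.1 lam hwdiag b hbstar c hadm u
    have h3 := hu2 β hβ.1 hβ.2
    rw [e1, e2, hidx] at h3
    exact h3
end
end

section
/- Suppose Assumption (G1) holds and Assumption (G2) holds with constant c₀>0, and let α̂^N=(α̂^{1,N},…,α̂^{N,N})∈𝒜^N be a Nash equilibrium of the N-player graph game. Then 4c₀²·𝔼[∫₀^T Σ_{i=1}^N (α̂^{i,N}_t)² dt] ≤ 𝔼[∫₀^T Σ_{i=1}^N (b^{i,N}_t)² dt]. -/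
open MeasureTheory Set Filter

noncomputable section

variable {Ω : Type}

section AuxCS

variable {X : Type*} [MeasurableSpace X] {μ : Measure X}

/-- Product of two functions with integrable squares is integrable. -/
lemma integrable_mul_of_sq {f g : X → ℝ} (hf : AEStronglyMeasurable f μ)
    (hg : AEStronglyMeasurable g μ)
    (hf2 : Integrable (fun x => f x ^ 2) μ) (hg2 : Integrable (fun x => g x ^ 2) μ) :
    Integrable (fun x => f x * g x) μ := by
  refine Integrable.mono' (((hf2.add hg2).div_const 2)) (hf.mul hg) ?_
  filter_upwards with x
  simp only [Pi.add_apply, Real.norm_eq_abs, abs_mul]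
  nlinarith [sq_nonneg (|f x| - |g x|), abs_nonneg (f x), abs_nonneg (g x),
    sq_abs (f x), sq_abs (g x)]

/-- Cauchy–Schwarz for integrals. -/
lemma sq_integral_mul_le {f g : X → ℝ} (hf : AEStronglyMeasurable f μ)
    (hg : AEStronglyMeasurable g μ)
    (hf2 : Integrable (fun x => f x ^ 2) μ) (hg2 : Integrable (fun x => g x ^ 2) μ) :
    (∫ x, f x * g x ∂μ) ^ 2 ≤ (∫ x, f x ^ 2 ∂μ) * (∫ x, g x ^ 2 ∂μ) := by
  have hfg := integrable_mul_of_sq hf hg hf2 hg2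
  have key : ∀ c : ℝ, 0 ≤ (∫ x, f x ^ 2 ∂μ) * (c * c) + (2 * ∫ x, f x * g x ∂μ) * c
      + ∫ x, g x ^ 2 ∂μ := by
    intro c
    have h2 : 0 ≤ ∫ x, (c * f x + g x) ^ 2 ∂μ :=
      integral_nonneg fun x => sq_nonneg _
    have h3 : ∫ x, (c * f x + g x) ^ 2 ∂μ
        = (∫ x, f x ^ 2 ∂μ) * (c * c) + (2 * ∫ x, f x * g x ∂μ) * c + ∫ x, g x ^ 2 ∂μ := by
      have : (fun x => (c * f x + g x) ^ 2)
          = fun x => c ^ 2 * f x ^ 2 + 2 * c * (f x * g x) + g x ^ 2 := by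
        funext x; ring
      have hI1 : Integrable (fun x => c ^ 2 * f x ^ 2 + 2 * c * (f x * g x)) μ :=
        (hf2.const_mul (c ^ 2)).add (hfg.const_mul (2 * c))
      rw [this, integral_add hI1 hg2,
        integral_add (hf2.const_mul (c ^ 2)) (hfg.const_mul (2 * c)), integral_const_mul,
        integral_const_mul]
      ring
    linarith [h3 ▸ h2]
  have := discrim_le_zero key
  rw [discrim] at this
  nlinarith [this]

/-- From `|x|² ≤ K·A·B` with everything nonneg, get `|x| ≤ √K · (A+B)/2`. -/
lemma abs_le_of_sq_le_prod {x K A B : ℝ} (hK : 0 ≤ K) (hA : 0 ≤ A) (hB : 0 ≤ B)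
    (h : x ^ 2 ≤ K * A * B) : |x| ≤ Real.sqrt K * ((A + B) / 2) := by
  have h1 : x ^ 2 ≤ (Real.sqrt K * ((A + B) / 2)) ^ 2 := by
    have : (Real.sqrt K * ((A + B) / 2)) ^ 2 = K * ((A + B) / 2) ^ 2 := by
      rw [mul_pow, Real.sq_sqrt hK]
    rw [this]
    nlinarith [sq_nonneg (A - B)]
  calc |x| = Real.sqrt (x ^ 2) := (Real.sqrt_sq_eq_abs x).symm
    _ ≤ Real.sqrt ((Real.sqrt K * ((A + B) / 2)) ^ 2) := Real.sqrt_le_sqrt h1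
    _ = |Real.sqrt K * ((A + B) / 2)| := Real.sqrt_sq_eq_abs _
    _ = Real.sqrt K * ((A + B) / 2) := abs_of_nonneg (by positivity)

end AuxCS
section AuxKernel

variable {T : ℝ}

lemma kernel_prod_integrable {G : ℝ → ℝ → ℝ} (hG : IsL2Kernel T G)
    {f g : ℝ → ℝ} (hf : Measurable f) (hg : Measurable g)
    (hf2 : Integrable (fun t => f t ^ 2) (volume.restrict (Icc (0:ℝ) T)))
    (hg2 : Integrable (fun t => g t ^ 2) (volume.restrict (Icc (0:ℝ) T))) :
    Integrable (fun p : ℝ × ℝ => f p.1 * G p.1 p.2 * g p.2)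
      ((volume.restrict (Icc (0:ℝ) T)).prod (volume.restrict (Icc (0:ℝ) T))) := by
  have hm : AEStronglyMeasurable (fun p : ℝ × ℝ => f p.1 * G p.1 p.2 * g p.2)
      ((volume.restrict (Icc (0:ℝ) T)).prod (volume.restrict (Icc (0:ℝ) T))) := by
    apply Measurable.aestronglyMeasurable
    exact ((hf.comp measurable_fst).mul (hG.1.comp measurable_id)).mul (hg.comp measurable_snd)
  have hdom : Integrable (fun p : ℝ × ℝ =>
      ((G p.1 p.2) ^ 2 + (f p.1 ^ 2) * (g p.2 ^ 2)) / 2)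
      ((volume.restrict (Icc (0:ℝ) T)).prod (volume.restrict (Icc (0:ℝ) T))) :=
    (hG.2.add (hf2.mul_prod hg2)).div_const 2
  refine hdom.mono' hm ?_
  filter_upwards with p
  simp only [Real.norm_eq_abs, abs_mul]
  nlinarith [sq_nonneg (|G p.1 p.2| - |f p.1| * |g p.2|), abs_nonneg (G p.1 p.2),
    abs_nonneg (f p.1), abs_nonneg (g p.2), sq_abs (G p.1 p.2), sq_abs (f p.1), sq_abs (g p.2),
    mul_nonneg (abs_nonneg (f p.1)) (abs_nonneg (g p.2))]

lemma mul_opK_eq (G : ℝ → ℝ → ℝ) (f g : ℝ → ℝ) (t : ℝ) :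
    f t * opK T G g t = ∫ s in Icc (0:ℝ) T, f t * G t s * g s := by
  simp only [opK, ← integral_const_mul]
  congr 1; funext s; ring

lemma integrable_mul_opK {G : ℝ → ℝ → ℝ} (hG : IsL2Kernel T G)
    {f g : ℝ → ℝ} (hf : Measurable f) (hg : Measurable g)
    (hf2 : Integrable (fun t => f t ^ 2) (volume.restrict (Icc (0:ℝ) T)))
    (hg2 : Integrable (fun t => g t ^ 2) (volume.restrict (Icc (0:ℝ) T))) :
    Integrable (fun t => f t * opK T G g t) (volume.restrict (Icc (0:ℝ) T)) := by
  have h := (kernel_prod_integrable hG hf hg hf2 hg2).integral_prod_left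
  refine h.congr (Eventually.of_forall fun t => ?_)
  exact (mul_opK_eq G f g t).symm

lemma ip_opK_eq {G : ℝ → ℝ → ℝ} (hG : IsL2Kernel T G)
    {f g : ℝ → ℝ} (hf : Measurable f) (hg : Measurable g)
    (hf2 : Integrable (fun t => f t ^ 2) (volume.restrict (Icc (0:ℝ) T)))
    (hg2 : Integrable (fun t => g t ^ 2) (volume.restrict (Icc (0:ℝ) T))) :
    ip T f (opK T G g) = ∫ p, f p.1 * G p.1 p.2 * g p.2
      ∂((volume.restrict (Icc (0:ℝ) T)).prod (volume.restrict (Icc (0:ℝ) T))) := by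
  have h1 : ip T f (opK T G g)
      = ∫ t in Icc (0:ℝ) T, ∫ s in Icc (0:ℝ) T, f t * G t s * g s := by
    unfold ip; congr 1; funext t; exact mul_opK_eq G f g t
  rw [h1]
  exact integral_integral (kernel_prod_integrable hG hf hg hf2 hg2)

lemma ip_opKadj_eq {G : ℝ → ℝ → ℝ} (hG : IsL2Kernel T G)
    {f g : ℝ → ℝ} (hf : Measurable f) (hg : Measurable g)
    (hf2 : Integrable (fun t => f t ^ 2) (volume.restrict (Icc (0:ℝ) T)))
    (hg2 : Integrable (fun t => g t ^ 2) (volume.restrict (Icc (0:ℝ) T))) :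
    ip T f (opKadj T G g) = ip T g (opK T G f) := by
  have h1 : ip T f (opKadj T G g)
      = ∫ t in Icc (0:ℝ) T, ∫ s in Icc (0:ℝ) T, g s * G s t * f t := by
    unfold ip opKadj; congr 1; funext t
    rw [← integral_const_mul]; congr 1; funext s; ring
  have h2 : ip T g (opK T G f)
      = ∫ s in Icc (0:ℝ) T, ∫ t in Icc (0:ℝ) T, g s * G s t * f t := by
    unfold ip; congr 1; funext s; exact mul_opK_eq G g f s
  rw [h1, h2]
  exact integral_integral_swap
    ((kernel_prod_integrable hG hg hf hg2 hf2).swap :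
      Integrable (Function.uncurry fun t s => g s * G s t * f t) _)

lemma opK_sq_integrable_and_le {G : ℝ → ℝ → ℝ} (hG : IsL2Kernel T G)
    {g : ℝ → ℝ} (hg : Measurable g)
    (hg2 : Integrable (fun t => g t ^ 2) (volume.restrict (Icc (0:ℝ) T))) :
    Integrable (fun t => (opK T G g t) ^ 2) (volume.restrict (Icc (0:ℝ) T)) ∧
    ∫ t in Icc (0:ℝ) T, (opK T G g t) ^ 2
      ≤ (∫ p, (G p.1 p.2) ^ 2
          ∂((volume.restrict (Icc (0:ℝ) T)).prod (volume.restrict (Icc (0:ℝ) T))))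
        * ∫ t in Icc (0:ℝ) T, g t ^ 2 := by
  have hsec : ∀ᵐ t ∂(volume.restrict (Icc (0:ℝ) T)),
      Integrable (fun s => G t s ^ 2) (volume.restrict (Icc (0:ℝ) T)) := hG.2.prod_right_ae
  have hbd : ∀ᵐ t ∂(volume.restrict (Icc (0:ℝ) T)),
      (opK T G g t) ^ 2 ≤ (∫ s in Icc (0:ℝ) T, G t s ^ 2) * ∫ s in Icc (0:ℝ) T, g s ^ 2 := by
    filter_upwards [hsec] with t ht
    have hGt : Measurable (G t) := hG.1.comp measurable_prodMk_left
    exact sq_integral_mul_le hGt.aestronglyMeasurable hg.aestronglyMeasurable ht hg2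
  have hmeas : StronglyMeasurable (fun t => opK T G g t) := by
    apply StronglyMeasurable.integral_prod_right
    exact ((hG.1.comp measurable_id).mul (hg.comp measurable_snd)).stronglyMeasurable
  have hGint : Integrable (fun t => ∫ s in Icc (0:ℝ) T, G t s ^ 2)
      (volume.restrict (Icc (0:ℝ) T)) := hG.2.integral_prod_left
  have hdom : Integrable
      (fun t => (∫ s in Icc (0:ℝ) T, G t s ^ 2) * ∫ s in Icc (0:ℝ) T, g s ^ 2)
      (volume.restrict (Icc (0:ℝ) T)) := hGint.mul_const _
  have hint : Integrable (fun t => (opK T G g t) ^ 2) (volume.restrict (Icc (0:ℝ) T)) := by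
    refine hdom.mono' ((hmeas.pow 2).aestronglyMeasurable) ?_
    filter_upwards [hbd] with t ht
    rw [Real.norm_eq_abs, abs_of_nonneg (sq_nonneg _)]
    exact ht
  refine ⟨hint, ?_⟩
  calc ∫ t in Icc (0:ℝ) T, (opK T G g t) ^ 2
      ≤ ∫ t in Icc (0:ℝ) T,
          (∫ s in Icc (0:ℝ) T, G t s ^ 2) * ∫ s in Icc (0:ℝ) T, g s ^ 2 :=
        integral_mono_ae hint hdom hbd
    _ = (∫ t in Icc (0:ℝ) T, ∫ s in Icc (0:ℝ) T, G t s ^ 2) * ∫ s in Icc (0:ℝ) T, g s ^ 2 :=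
        integral_mul_const _ _
    _ = _ := by rw [integral_integral (hG.2 : Integrable (Function.uncurry fun t s => G t s ^ 2) _)]

lemma sq_ip_opK_le {G : ℝ → ℝ → ℝ} (hG : IsL2Kernel T G)
    {f g : ℝ → ℝ} (hf : Measurable f) (hg : Measurable g)
    (hf2 : Integrable (fun t => f t ^ 2) (volume.restrict (Icc (0:ℝ) T)))
    (hg2 : Integrable (fun t => g t ^ 2) (volume.restrict (Icc (0:ℝ) T))) :
    (ip T f (opK T G g)) ^ 2
      ≤ (∫ p, (G p.1 p.2) ^ 2
          ∂((volume.restrict (Icc (0:ℝ) T)).prod (volume.restrict (Icc (0:ℝ) T))))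
        * (∫ t in Icc (0:ℝ) T, f t ^ 2) * ∫ t in Icc (0:ℝ) T, g t ^ 2 := by
  obtain ⟨hint, hle⟩ := opK_sq_integrable_and_le hG hg hg2
  have hmeas : StronglyMeasurable (fun t => opK T G g t) := by
    apply StronglyMeasurable.integral_prod_right
    exact ((hG.1.comp measurable_id).mul (hg.comp measurable_snd)).stronglyMeasurable
  have h1 : (ip T f (opK T G g)) ^ 2
      ≤ (∫ t in Icc (0:ℝ) T, f t ^ 2) * ∫ t in Icc (0:ℝ) T, (opK T G g t) ^ 2 :=
    sq_integral_mul_le hf.aestronglyMeasurable hmeas.aestronglyMeasurable hf2 hint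
  have hf2nn : 0 ≤ ∫ t in Icc (0:ℝ) T, f t ^ 2 := integral_nonneg fun t => sq_nonneg _
  calc (ip T f (opK T G g)) ^ 2
      ≤ (∫ t in Icc (0:ℝ) T, f t ^ 2) * ∫ t in Icc (0:ℝ) T, (opK T G g t) ^ 2 := h1
    _ ≤ (∫ t in Icc (0:ℝ) T, f t ^ 2) *
        ((∫ p, (G p.1 p.2) ^ 2
          ∂((volume.restrict (Icc (0:ℝ) T)).prod (volume.restrict (Icc (0:ℝ) T))))
          * ∫ t in Icc (0:ℝ) T, g t ^ 2) := by
        exact mul_le_mul_of_nonneg_left hle hf2nn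
    _ = _ := by ring

end AuxKernel
section AuxOmega

variable {Ω : Type} {mΩ : MeasurableSpace Ω} {P : Measure Ω} [IsProbabilityMeasure P] {T : ℝ}

lemma sqInt_sections_ae {u : ℝ → Ω → ℝ} (hu : SqInt T P u) :
    ∀ᵐ ω ∂P, Integrable (fun t => (u t ω) ^ 2) (volume.restrict (Icc (0:ℝ) T)) :=
  Integrable.prod_left_ae hu

lemma sqInt_S_integrable {u : ℝ → Ω → ℝ} (hu : SqInt T P u) :
    Integrable (fun ω => ∫ t in Icc (0:ℝ) T, (u t ω) ^ 2) P :=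
  hu.swap.integral_prod_left

lemma jm_section {u : ℝ → Ω → ℝ} (hu : Measurable (fun p : ℝ × Ω => u p.1 p.2)) (ω : Ω) :
    Measurable (fun t => u t ω) :=
  hu.comp (measurable_prodMk_right)

/-- Integrability over `Ω` of the plain pairing. -/
lemma integrable_ip_pair {u v : ℝ → Ω → ℝ}
    (hujm : Measurable (fun p : ℝ × Ω => u p.1 p.2)) (husq : SqInt T P u)
    (hvjm : Measurable (fun p : ℝ × Ω => v p.1 p.2)) (hvsq : SqInt T P v) :
    Integrable (fun ω => ip T (fun t => u t ω) (fun t => v t ω)) P := by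
  have hm : StronglyMeasurable (fun ω => ip T (fun t => u t ω) (fun t => v t ω)) := by
    apply StronglyMeasurable.integral_prod_right (f := fun ω t => u t ω * v t ω)
    exact ((hujm.comp measurable_swap).mul (hvjm.comp measurable_swap)).stronglyMeasurable
  have hdom : Integrable (fun ω =>
      ((∫ t in Icc (0:ℝ) T, (u t ω) ^ 2) + ∫ t in Icc (0:ℝ) T, (v t ω) ^ 2) / 2) P :=
    ((sqInt_S_integrable husq).add (sqInt_S_integrable hvsq)).div_const 2
  refine hdom.mono' hm.aestronglyMeasurable ?_
  filter_upwards [sqInt_sections_ae husq, sqInt_sections_ae hvsq] with ω hu2 hv2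
  have h1 : ‖ip T (fun t => u t ω) (fun t => v t ω)‖
      ≤ ∫ t in Icc (0:ℝ) T, |u t ω * v t ω| := by
    have := norm_integral_le_integral_norm (μ := volume.restrict (Icc (0:ℝ) T))
      (fun t => u t ω * v t ω)
    simpa [ip, Real.norm_eq_abs, abs_mul] using this
  have h2 : ∫ t in Icc (0:ℝ) T, |u t ω * v t ω|
      ≤ ∫ t in Icc (0:ℝ) T, ((u t ω) ^ 2 + (v t ω) ^ 2) / 2 := by
    refine integral_mono_ae
      ((integrable_mul_of_sq ((jm_section hujm ω).aestronglyMeasurable)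
        ((jm_section hvjm ω).aestronglyMeasurable) hu2 hv2).abs)
      ((hu2.add hv2).div_const 2) ?_
    filter_upwards with t
    rw [abs_mul]
    nlinarith [sq_nonneg (|u t ω| - |v t ω|), sq_abs (u t ω), sq_abs (v t ω),
      abs_nonneg (u t ω), abs_nonneg (v t ω)]
  have h3 : ∫ t in Icc (0:ℝ) T, ((u t ω) ^ 2 + (v t ω) ^ 2) / 2
      = ((∫ t in Icc (0:ℝ) T, (u t ω) ^ 2) + ∫ t in Icc (0:ℝ) T, (v t ω) ^ 2) / 2 := by
    rw [← integral_add hu2 hv2, integral_div]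
  linarith [h1, h2, h3 ▸ h2]

/-- Integrability over `Ω` of the kernel pairing. -/
lemma integrable_ip_opK {G : ℝ → ℝ → ℝ} (hG : IsL2Kernel T G) {u v : ℝ → Ω → ℝ}
    (hujm : Measurable (fun p : ℝ × Ω => u p.1 p.2)) (husq : SqInt T P u)
    (hvjm : Measurable (fun p : ℝ × Ω => v p.1 p.2)) (hvsq : SqInt T P v) :
    Integrable (fun ω => ip T (fun t => u t ω) (opK T G (fun s => v s ω))) P := by
  set KG : ℝ := ∫ p, (G p.1 p.2) ^ 2
      ∂((volume.restrict (Icc (0:ℝ) T)).prod (volume.restrict (Icc (0:ℝ) T))) with hKG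
  have hKGnn : 0 ≤ KG := integral_nonneg fun p => sq_nonneg _
  set Φ : Ω → ℝ := fun ω => ∫ p, u p.1 ω * G p.1 p.2 * v p.2 ω
      ∂((volume.restrict (Icc (0:ℝ) T)).prod (volume.restrict (Icc (0:ℝ) T))) with hΦ
  have hΦm : StronglyMeasurable Φ := by
    apply StronglyMeasurable.integral_prod_right
      (f := fun ω (p : ℝ × ℝ) => u p.1 ω * G p.1 p.2 * v p.2 ω)
    apply Measurable.stronglyMeasurable
    have h1 : Measurable (fun q : Ω × (ℝ × ℝ) => u q.2.1 q.1) :=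
      hujm.comp ((measurable_fst.comp measurable_snd).prodMk measurable_fst)
    have h2 : Measurable (fun q : Ω × (ℝ × ℝ) => G q.2.1 q.2.2) :=
      hG.1.comp measurable_snd
    have h3 : Measurable (fun q : Ω × (ℝ × ℝ) => v q.2.2 q.1) :=
      hvjm.comp ((measurable_snd.comp measurable_snd).prodMk measurable_fst)
    exact (h1.mul h2).mul h3
  have heq : ∀ᵐ ω ∂P,
      ip T (fun t => u t ω) (opK T G (fun s => v s ω)) = Φ ω := by
    filter_upwards [sqInt_sections_ae husq, sqInt_sections_ae hvsq] with ω hu2 hv2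
    exact ip_opK_eq hG (jm_section hujm ω) (jm_section hvjm ω) hu2 hv2
  have hdom : Integrable (fun ω => Real.sqrt KG *
      (((∫ t in Icc (0:ℝ) T, (u t ω) ^ 2) + ∫ t in Icc (0:ℝ) T, (v t ω) ^ 2) / 2)) P :=
    (((sqInt_S_integrable husq).add (sqInt_S_integrable hvsq)).div_const 2).const_mul _
  have hbd : ∀ᵐ ω ∂P, ‖ip T (fun t => u t ω) (opK T G (fun s => v s ω))‖
      ≤ Real.sqrt KG *
        (((∫ t in Icc (0:ℝ) T, (u t ω) ^ 2) + ∫ t in Icc (0:ℝ) T, (v t ω) ^ 2) / 2) := by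
    filter_upwards [sqInt_sections_ae husq, sqInt_sections_ae hvsq] with ω hu2 hv2
    rw [Real.norm_eq_abs]
    exact abs_le_of_sq_le_prod hKGnn (integral_nonneg fun t => sq_nonneg _)
      (integral_nonneg fun t => sq_nonneg _)
      (sq_ip_opK_le hG (jm_section hujm ω) (jm_section hvjm ω) hu2 hv2)
  exact hdom.mono' (hΦm.aestronglyMeasurable.congr (heq.mono fun ω h => h.symm)) hbd

/-- Integrability over `Ω` of the adjoint kernel pairing. -/
lemma integrable_ip_opKadj {G : ℝ → ℝ → ℝ} (hG : IsL2Kernel T G) {u v : ℝ → Ω → ℝ}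
    (hujm : Measurable (fun p : ℝ × Ω => u p.1 p.2)) (husq : SqInt T P u)
    (hvjm : Measurable (fun p : ℝ × Ω => v p.1 p.2)) (hvsq : SqInt T P v) :
    Integrable (fun ω => ip T (fun t => u t ω) (opKadj T G (fun s => v s ω))) P := by
  refine (integrable_ip_opK hG hvjm hvsq hujm husq).congr ?_
  filter_upwards [sqInt_sections_ae husq, sqInt_sections_ae hvsq] with ω hu2 hv2
  exact (ip_opKadj_eq hG (jm_section hujm ω) (jm_section hvjm ω) hu2 hv2).symm

end AuxOmega
section AuxNice

variable {Ω : Type} {mΩ : MeasurableSpace Ω} {P : Measure Ω} [IsProbabilityMeasure P] {T : ℝ}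

lemma prod_ae_fst_mem (P : Measure Ω) [IsProbabilityMeasure P] (T : ℝ) :
    ∀ᵐ p : ℝ × Ω ∂((volume.restrict (Icc (0:ℝ) T)).prod P), p.1 ∈ Icc (0:ℝ) T := by
  rw [ae_iff]
  have hset : {p : ℝ × Ω | ¬ p.1 ∈ Icc (0:ℝ) T} = (Icc (0:ℝ) T)ᶜ ×ˢ (univ : Set Ω) := by
    ext p; simp
  rw [hset, Measure.prod_prod]
  have : (volume.restrict (Icc (0:ℝ) T)) ((Icc (0:ℝ) T)ᶜ) = 0 := by
    rw [Measure.restrict_apply measurableSet_Icc.compl]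
    simp
  simp [this]

lemma exists_nice (F : Filtration ℝ mΩ) {α : ℝ → Ω → ℝ}
    (hα : Admissible T F P α) :
    ∃ α' : ℝ → Ω → ℝ, Measurable (fun p : ℝ × Ω => α' p.1 p.2) ∧ SqInt T P α' ∧
      ∀ ω t, t ≤ T → α' t ω = α t ω := by
  refine ⟨fun t ω => α (min t T) ω, ?_, ?_, ?_⟩
  · have hprog := hα.1 T
    have h1 : Measurable (fun p : ℝ × Ω =>
        (⟨min p.1 T, mem_Iic.2 (min_le_right _ _)⟩ : Set.Iic T)) :=
      (measurable_fst.min measurable_const).subtype_mk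
    have h2 : @Measurable (ℝ × Ω) Ω Prod.instMeasurableSpace (F T) Prod.snd :=
      measurable_snd.mono le_rfl (F.le T)
    exact (hprog.comp_measurable (h1.prodMk h2)).measurable
  · refine hα.2.congr ?_
    filter_upwards [prod_ae_fst_mem P T] with p hp
    simp only [min_eq_left hp.2]
  · intro ω t ht
    simp only [min_eq_left ht]

lemma admissible_smul (F : Filtration ℝ mΩ) {α : ℝ → Ω → ℝ} (r : ℝ)
    (hα : Admissible T F P α) : Admissible T F P (fun t ω => r * α t ω) := by
  constructor
  · exact (progMeasurable_const F r).mul hα.1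
  · have : (fun p : ℝ × Ω => (r * α p.1 p.2) ^ 2)
        = fun p => r ^ 2 * (α p.1 p.2) ^ 2 := by funext p; ring
    rw [SqInt, this]
    exact hα.2.const_mul _

end AuxNice
section AuxIp

variable {T : ℝ}

lemma ip_congr {f f' g g' : ℝ → ℝ} (hf : EqOn f f' (Icc (0:ℝ) T))
    (hg : EqOn g g' (Icc (0:ℝ) T)) : ip T f g = ip T f' g' := by
  unfold ip
  exact setIntegral_congr_fun measurableSet_Icc fun t ht => by rw [hf ht, hg ht]

lemma opK_congr (G : ℝ → ℝ → ℝ) {g g' : ℝ → ℝ} (hg : EqOn g g' (Icc (0:ℝ) T)) (t : ℝ) :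
    opK T G g t = opK T G g' t := by
  unfold opK
  exact setIntegral_congr_fun measurableSet_Icc fun s hs => by rw [hg hs]

lemma opKadj_congr (G : ℝ → ℝ → ℝ) {g g' : ℝ → ℝ} (hg : EqOn g g' (Icc (0:ℝ) T)) (t : ℝ) :
    opKadj T G g t = opKadj T G g' t := by
  unfold opKadj
  exact setIntegral_congr_fun measurableSet_Icc fun s hs => by rw [hg hs]

lemma opK_const_mul (G : ℝ → ℝ → ℝ) (g : ℝ → ℝ) (r t : ℝ) :
    opK T G (fun s => r * g s) t = r * opK T G g t := by
  unfold opK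
  rw [← integral_const_mul]
  congr 1; funext s; ring

lemma ip_mul_left (r : ℝ) (f g : ℝ → ℝ) : ip T (fun t => r * f t) g = r * ip T f g := by
  unfold ip
  rw [← integral_const_mul]
  congr 1; funext t; ring

lemma ip_mul_right (r : ℝ) (f g : ℝ → ℝ) : ip T f (fun t => r * g t) = r * ip T f g := by
  unfold ip
  rw [← integral_const_mul]
  congr 1; funext t; ring

lemma ip_add_right {f g h : ℝ → ℝ}
    (hg : Integrable (fun t => f t * g t) (volume.restrict (Icc (0:ℝ) T)))
    (hh : Integrable (fun t => f t * h t) (volume.restrict (Icc (0:ℝ) T))) :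
    ip T f (fun t => g t + h t) = ip T f g + ip T f h := by
  unfold ip
  rw [← integral_add hg hh]
  congr 1; funext t; ring

lemma foc_of_max {a b : ℝ} (h : ∀ r : ℝ, a * r ^ 2 + b * r ≤ a + b) : 2 * a + b = 0 := by
  have key : ∀ s : ℝ, 0 ≤ (-a) * (s * s) + (-(2 * a + b)) * s + 0 := by
    intro s
    have := h (1 + s)
    nlinarith
  have hd := discrim_le_zero key
  rw [discrim] at hd
  nlinarith

end AuxIp
section AuxSwap

variable {T : ℝ}

lemma isL2Kernel_swap {G : ℝ → ℝ → ℝ} (hG : IsL2Kernel T G) :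
    IsL2Kernel T (fun t s => G s t) := by
  constructor
  · exact hG.1.comp measurable_swap
  · exact hG.2.swap

lemma opKadj_eq_opK_swap (G : ℝ → ℝ → ℝ) (g : ℝ → ℝ) :
    opKadj T G g = opK T (fun t s => G s t) g := rfl

end AuxSwap
section AuxFinal

lemma sum_sqrt_mul_sqrt_le {N : ℕ} (f g : Fin N → ℝ) (hf : ∀ i, 0 ≤ f i) (hg : ∀ i, 0 ≤ g i) :
    ∑ i, Real.sqrt (f i) * Real.sqrt (g i)
      ≤ Real.sqrt (∑ i, f i) * Real.sqrt (∑ i, g i) := by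
  have h1 : (∑ i, Real.sqrt (f i) * Real.sqrt (g i)) ^ 2
      ≤ (∑ i, Real.sqrt (f i) ^ 2) * (∑ i, Real.sqrt (g i) ^ 2) :=
    Finset.sum_mul_sq_le_sq_mul_sq Finset.univ _ _
  have h2 : (∑ i, Real.sqrt (f i) ^ 2) = ∑ i, f i := by
    apply Finset.sum_congr rfl; intro i _; exact Real.sq_sqrt (hf i)
  have h3 : (∑ i, Real.sqrt (g i) ^ 2) = ∑ i, g i := by
    apply Finset.sum_congr rfl; intro i _; exact Real.sq_sqrt (hg i)
  rw [h2, h3] at h1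
  have h4 : 0 ≤ ∑ i, Real.sqrt (f i) * Real.sqrt (g i) :=
    Finset.sum_nonneg fun i _ => mul_nonneg (Real.sqrt_nonneg _) (Real.sqrt_nonneg _)
  calc ∑ i, Real.sqrt (f i) * Real.sqrt (g i)
      = Real.sqrt ((∑ i, Real.sqrt (f i) * Real.sqrt (g i)) ^ 2) := by
        rw [Real.sqrt_sq h4]
    _ ≤ Real.sqrt ((∑ i, f i) * (∑ i, g i)) := Real.sqrt_le_sqrt h1
    _ = _ := Real.sqrt_mul (Finset.sum_nonneg fun i _ => hf i) _

lemma integral_sqrt_mul_sqrt_le {Ω : Type} [MeasurableSpace Ω] {P : Measure Ω}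
    {f g : Ω → ℝ} (hf : Integrable f P) (hg : Integrable g P)
    (hf0 : ∀ ω, 0 ≤ f ω) (hg0 : ∀ ω, 0 ≤ g ω) :
    ∫ ω, Real.sqrt (f ω) * Real.sqrt (g ω) ∂P
      ≤ Real.sqrt (∫ ω, f ω ∂P) * Real.sqrt (∫ ω, g ω ∂P) := by
  have hfm : AEStronglyMeasurable (fun ω => Real.sqrt (f ω)) P :=
    Real.continuous_sqrt.comp_aestronglyMeasurable hf.1
  have hgm : AEStronglyMeasurable (fun ω => Real.sqrt (g ω)) P :=
    Real.continuous_sqrt.comp_aestronglyMeasurable hg.1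
  have hf2 : Integrable (fun ω => Real.sqrt (f ω) ^ 2) P := by
    refine hf.congr (Eventually.of_forall fun ω => ?_)
    simp only [Real.sq_sqrt (hf0 ω)]
  have hg2 : Integrable (fun ω => Real.sqrt (g ω) ^ 2) P := by
    refine hg.congr (Eventually.of_forall fun ω => ?_)
    simp only [Real.sq_sqrt (hg0 ω)]
  have h1 : (∫ ω, Real.sqrt (f ω) * Real.sqrt (g ω) ∂P) ^ 2
      ≤ (∫ ω, Real.sqrt (f ω) ^ 2 ∂P) * ∫ ω, Real.sqrt (g ω) ^ 2 ∂P :=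
    sq_integral_mul_le hfm hgm hf2 hg2
  have h2 : (∫ ω, Real.sqrt (f ω) ^ 2 ∂P) = ∫ ω, f ω ∂P :=
    integral_congr_ae (Eventually.of_forall fun ω => Real.sq_sqrt (hf0 ω))
  have h3 : (∫ ω, Real.sqrt (g ω) ^ 2 ∂P) = ∫ ω, g ω ∂P :=
    integral_congr_ae (Eventually.of_forall fun ω => Real.sq_sqrt (hg0 ω))
  rw [h2, h3] at h1
  have h4 : 0 ≤ ∫ ω, f ω ∂P := integral_nonneg hf0
  calc ∫ ω, Real.sqrt (f ω) * Real.sqrt (g ω) ∂P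
      ≤ |∫ ω, Real.sqrt (f ω) * Real.sqrt (g ω) ∂P| := le_abs_self _
    _ = Real.sqrt ((∫ ω, Real.sqrt (f ω) * Real.sqrt (g ω) ∂P) ^ 2) :=
        (Real.sqrt_sq_eq_abs _).symm
    _ ≤ Real.sqrt ((∫ ω, f ω ∂P) * ∫ ω, g ω ∂P) := Real.sqrt_le_sqrt h1
    _ = _ := Real.sqrt_mul h4 _

end AuxFinal
section AuxSplit

variable {T : ℝ}

lemma integrable_mul_opKadj {G : ℝ → ℝ → ℝ} (hG : IsL2Kernel T G)
    {f g : ℝ → ℝ} (hf : Measurable f) (hg : Measurable g)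
    (hf2 : Integrable (fun t => f t ^ 2) (volume.restrict (Icc (0:ℝ) T)))
    (hg2 : Integrable (fun t => g t ^ 2) (volume.restrict (Icc (0:ℝ) T))) :
    Integrable (fun t => f t * opKadj T G g t) (volume.restrict (Icc (0:ℝ) T)) := by
  rw [opKadj_eq_opK_swap]
  exact integrable_mul_opK (isL2Kernel_swap hG) hf hg hf2 hg2

lemma ip_opK_add_lam {G : ℝ → ℝ → ℝ} (hG : IsL2Kernel T G) (lam : ℝ)
    {a : ℝ → ℝ} (ha : Measurable a)
    (ha2 : Integrable (fun t => a t ^ 2) (volume.restrict (Icc (0:ℝ) T))) :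
    ip T a (fun t => opK T G a t + lam * a t)
      = ip T a (opK T G a) + lam * ip T a a := by
  have h1 : Integrable (fun t => a t * opK T G a t) (volume.restrict (Icc (0:ℝ) T)) :=
    integrable_mul_opK hG ha ha ha2 ha2
  have h2 : Integrable (fun t => a t * (lam * a t)) (volume.restrict (Icc (0:ℝ) T)) := by
    have : (fun t => a t * (lam * a t)) = fun t => lam * (a t * a t) := by funext t; ring
    rw [this]
    exact (integrable_mul_of_sq ha.aestronglyMeasurable ha.aestronglyMeasurable ha2 ha2).const_mul _
  rw [ip_add_right h1 h2, ip_mul_right]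

lemma ip_opK_add_opKadj {G : ℝ → ℝ → ℝ} (hG : IsL2Kernel T G)
    {a g : ℝ → ℝ} (ha : Measurable a) (hg : Measurable g)
    (ha2 : Integrable (fun t => a t ^ 2) (volume.restrict (Icc (0:ℝ) T)))
    (hg2 : Integrable (fun t => g t ^ 2) (volume.restrict (Icc (0:ℝ) T))) :
    ip T a (fun t => opK T G g t + opKadj T G g t)
      = ip T a (opK T G g) + ip T a (opKadj T G g) :=
  ip_add_right (integrable_mul_opK hG ha hg ha2 hg2) (integrable_mul_opKadj hG ha hg ha2 hg2)

/-- Expand an integral of `a · (d · ∑ⱼ cⱼ · 𝐆 gⱼ)`. -/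
lemma integral_mul_sum_opK {M : ℕ} {G : ℝ → ℝ → ℝ} (hG : IsL2Kernel T G)
    {a : ℝ → ℝ} (ha : Measurable a)
    (ha2 : Integrable (fun t => a t ^ 2) (volume.restrict (Icc (0:ℝ) T)))
    {g : Fin M → ℝ → ℝ} (hg : ∀ j, Measurable (g j))
    (hg2 : ∀ j, Integrable (fun t => g j t ^ 2) (volume.restrict (Icc (0:ℝ) T)))
    (cjs : Fin M → ℝ) (d : ℝ) :
    Integrable (fun t => a t * (d * ∑ j, cjs j * opK T G (g j) t))
        (volume.restrict (Icc (0:ℝ) T)) ∧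
      ∫ t in Icc (0:ℝ) T, a t * (d * ∑ j, cjs j * opK T G (g j) t)
        = d * ∑ j, cjs j * ip T a (opK T G (g j)) := by
  have hrw : (fun t => a t * (d * ∑ j, cjs j * opK T G (g j) t))
      = fun t => ∑ j, d * cjs j * (a t * opK T G (g j) t) := by
    funext t
    rw [Finset.mul_sum, Finset.mul_sum]
    exact Finset.sum_congr rfl fun j _ => by ring
  have hint : ∀ j ∈ Finset.univ, Integrable
      (fun t => d * cjs j * (a t * opK T G (g j) t)) (volume.restrict (Icc (0:ℝ) T)) :=
    fun j _ => (integrable_mul_opK hG ha (hg j) ha2 (hg2 j)).const_mul _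
  constructor
  · rw [hrw]; exact integrable_finset_sum _ hint
  · rw [hrw, integral_finset_sum _ hint, Finset.mul_sum]
    exact Finset.sum_congr rfl fun j _ => by rw [integral_const_mul]; unfold ip; ring

end AuxSplit
/-- Uniform a priori bound on the Nash equilibrium of the `N`-player
graph game in terms of the idiosyncratic noise. -/
theorem nash_uniform_bound
    {Ω : Type} {mΩ : MeasurableSpace Ω} (P : Measure Ω) [IsProbabilityMeasure P]
    (F : Filtration ℝ mΩ) (T : ℝ) (hT : 0 < T) (N : ℕ) (hN : 0 < N)
    (Atil Btil Ctil : ℝ → ℝ → ℝ)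
    (hA : IsVolterraKernel T Atil) (hBk : IsVolterraKernel T Btil)
    (hCk : IsVolterraKernel T Ctil)
    (lam : ℝ) (hlam : 0 < lam)
    (w : Fin N → Fin N → ℝ) (hw01 : ∀ i j, w i j ∈ Icc (0:ℝ) 1)
    (hwsymm : ∀ i j, w i j = w j i) (hwdiag : ∀ i, w i i = 0)
    (b : Fin N → ℝ → Ω → ℝ) (hb : ∀ i, ProgMeasurable F (b i) ∧ SqInt T P (b i))
    (bstar : ℝ → Ω → ℝ) (hbstar : ProgMeasurable F bstar ∧ SqInt T P bstar)
    (c : Fin N → Ω → ℝ) (hc : ∀ i, Integrable (c i) P ∧ Measurable[F T] (c i))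
    (c₀ : ℝ) (hc₀ : 0 < c₀) (hcoerc : CoercGraph T Atil Btil lam w c₀)
    (αhat : Fin N → ℝ → Ω → ℝ)
    (hNash : IsNashGraph T F P Atil Btil Ctil lam w b bstar c αhat) :
    4 * c₀ ^ 2 * (∫ ω, (∫ t in Icc (0:ℝ) T, ∑ i, (αhat i t ω) ^ 2) ∂P)
      ≤ ∫ ω, (∫ t in Icc (0:ℝ) T, ∑ i, (b i t ω) ^ 2) ∂P := by
  classical
  obtain ⟨hadm, hopt⟩ := hNash
  choose A hAjm hAsq hAeq using fun i => exists_nice (P := P) F (hadm i)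
  choose Bb hBjm hBsq hBeq using fun i => exists_nice (P := P) F ⟨(hb i).1, (hb i).2⟩
  obtain ⟨bs, hbsjm, hbssq, hbseq⟩ := exists_nice (P := P) F ⟨hbstar.1, hbstar.2⟩
  have hAm : ∀ i ω, Measurable fun t => A i t ω := fun i ω => jm_section (hAjm i) ω
  have hBm : ∀ i ω, Measurable fun t => Bb i t ω := fun i ω => jm_section (hBjm i) ω
  have hbsm : ∀ ω, Measurable fun t => bs t ω := fun ω => jm_section hbsjm ω
  have hAeq' : ∀ i ω, EqOn (fun t => A i t ω) (fun t => αhat i t ω) (Icc (0:ℝ) T) :=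
    fun i ω t ht => hAeq i ω t ht.2
  have hBeq' : ∀ i ω, EqOn (fun t => Bb i t ω) (fun t => b i t ω) (Icc (0:ℝ) T) :=
    fun i ω t ht => hBeq i ω t ht.2
  have hbseq' : ∀ ω, EqOn (fun t => bs t ω) (fun t => bstar t ω) (Icc (0:ℝ) T) :=
    fun ω t ht => hbseq ω t ht.2
  -- the a.e. event where all time-sections are square integrable
  have hEV : ∀ᵐ ω ∂P, (∀ i, Integrable (fun t => (A i t ω) ^ 2)
        (volume.restrict (Icc (0:ℝ) T)))
      ∧ (∀ i, Integrable (fun t => (Bb i t ω) ^ 2) (volume.restrict (Icc (0:ℝ) T)))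
      ∧ Integrable (fun t => (bs t ω) ^ 2) (volume.restrict (Icc (0:ℝ) T)) :=
    ((ae_all_iff.2 fun i => sqInt_sections_ae (hAsq i)).and
      ((ae_all_iff.2 fun i => sqInt_sections_ae (hBsq i)).and (sqInt_sections_ae hbssq)))
  -- the three coefficient processes
  set X : Fin N → Ω → ℝ := fun i ω =>
    -(ip T (fun t => A i t ω) (opK T Atil (fun s => A i s ω))
      + lam * ip T (fun t => A i t ω) (fun t => A i t ω)) with hXdef
  set Y : Fin N → Ω → ℝ := fun i ω =>
    -((1 / (N:ℝ)) * ∑ j, w i j *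
        (ip T (fun t => A i t ω) (opK T Btil (fun s => A j s ω))
          + ip T (fun t => A i t ω) (opKadj T Btil (fun s => A j s ω))))
      + ip T (fun t => Bb i t ω) (fun t => A i t ω) with hYdef
  set Z : Fin N → Ω → ℝ := fun i ω =>
    -((1 / (N:ℝ) ^ 2) * ∑ j, ∑ k, w i j * w i k *
        ip T (fun t => A j t ω) (opK T Ctil (fun s => A k s ω)))
      + (1 / (N:ℝ)) * ∑ j, w i j * ip T (fun t => bs t ω) (fun t => A j t ω)
      + c i ω with hZdef
  have hXint : ∀ i, Integrable (X i) P := by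
    intro i
    exact ((integrable_ip_opK hA.1 (hAjm i) (hAsq i) (hAjm i) (hAsq i)).add
      ((integrable_ip_pair (hAjm i) (hAsq i) (hAjm i) (hAsq i)).const_mul lam)).neg
  have hYint : ∀ i, Integrable (Y i) P := by
    intro i
    refine Integrable.add (Integrable.neg (Integrable.const_mul ?_ _))
      (integrable_ip_pair (hBjm i) (hBsq i) (hAjm i) (hAsq i))
    refine integrable_finset_sum Finset.univ fun j _ => Integrable.const_mul ?_ _
    exact (integrable_ip_opK hBk.1 (hAjm i) (hAsq i) (hAjm j) (hAsq j)).add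
      (integrable_ip_opKadj hBk.1 (hAjm i) (hAsq i) (hAjm j) (hAsq j))
  have hZint : ∀ i, Integrable (Z i) P := by
    intro i
    refine Integrable.add (Integrable.add (Integrable.neg (Integrable.const_mul ?_ _))
      (Integrable.const_mul ?_ _)) (hc i).1
    · refine integrable_finset_sum Finset.univ fun j _ => ?_
      refine integrable_finset_sum Finset.univ fun k _ => Integrable.const_mul ?_ _
      exact integrable_ip_opK hCk.1 (hAjm j) (hAsq j) (hAjm k) (hAsq k)
    · refine integrable_finset_sum Finset.univ fun j _ => Integrable.const_mul ?_ _
      exact integrable_ip_pair hbsjm hbssq (hAjm j) (hAsq j)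
  -- expansion of the objective along scalings of player i's control
  have hJup : ∀ (i : Fin N) (r : ℝ),
      Jgraph T P Atil Btil Ctil lam w b bstar c i
        (Function.update αhat i (fun t ω => r * αhat i t ω))
      = ∫ ω, (r ^ 2 * X i ω + r * Y i ω + Z i ω) ∂P := by
    intro i r
    refine integral_congr_ae ?_
    filter_upwards [hEV] with ω hev
    simp only [Jgraph, Function.update_self]
    -- term 1
    have e1 : ip T (fun t => r * αhat i t ω)
        (fun t => opK T Atil (fun s => r * αhat i s ω) t + lam * (r * αhat i t ω))
        = r ^ 2 * (ip T (fun t => A i t ω) (opK T Atil (fun s => A i s ω))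
          + lam * ip T (fun t => A i t ω) (fun t => A i t ω)) := by
      have h1 : (fun t => opK T Atil (fun s => r * αhat i s ω) t + lam * (r * αhat i t ω))
          = fun t => r * (opK T Atil (fun s => αhat i s ω) t + lam * αhat i t ω) := by
        funext t; rw [opK_const_mul]; ring
      rw [h1, ip_mul_left, ip_mul_right]
      have h2 : ip T (fun t => αhat i t ω)
          (fun t => opK T Atil (fun s => αhat i s ω) t + lam * αhat i t ω)
          = ip T (fun t => A i t ω)
            (fun t => opK T Atil (fun s => A i s ω) t + lam * A i t ω) := by
        refine (ip_congr (hAeq' i ω) ?_).symm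
        intro t ht
        simp only
        rw [opK_congr Atil (hAeq' i ω) t, hAeq i ω t ht.2]
      rw [h2, ip_opK_add_lam hA.1 lam (hAm i ω) (hev.1 i)]
      ring
    rw [e1]
    -- term 2
    have e2 : ∀ j, w i j * ip T (fun t => r * αhat i t ω)
        (fun t => opK T Btil (fun s => Function.update αhat i
            (fun t ω => r * αhat i t ω) j s ω) t
          + opKadj T Btil (fun s => Function.update αhat i
            (fun t ω => r * αhat i t ω) j s ω) t)
        = r * (w i j * (ip T (fun t => A i t ω) (opK T Btil (fun s => A j s ω))
          + ip T (fun t => A i t ω) (opKadj T Btil (fun s => A j s ω)))) := by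
      intro j
      by_cases hj : j = i
      · subst hj; rw [hwdiag j]; ring
      · simp only [Function.update_of_ne hj]
        rw [ip_mul_left]
        have h2 : ip T (fun t => αhat i t ω)
            (fun t => opK T Btil (fun s => αhat j s ω) t
              + opKadj T Btil (fun s => αhat j s ω) t)
            = ip T (fun t => A i t ω)
              (fun t => opK T Btil (fun s => A j s ω) t
                + opKadj T Btil (fun s => A j s ω) t) := by
          refine (ip_congr (hAeq' i ω) ?_).symm
          intro t ht
          simp only
          rw [opK_congr Btil (hAeq' j ω) t, opKadj_congr Btil (hAeq' j ω) t]
        rw [h2, ip_opK_add_opKadj hBk.1 (hAm i ω) (hAm j ω) (hev.1 i) (hev.1 j)]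
        ring
    rw [Finset.sum_congr rfl fun j _ => e2 j, ← Finset.mul_sum]
    -- term 3
    have e3 : ∀ j k : Fin N, w i j * w i k * ip T (fun t => Function.update αhat i
          (fun t ω => r * αhat i t ω) j t ω)
        (opK T Ctil (fun s => Function.update αhat i (fun t ω => r * αhat i t ω) k s ω))
        = w i j * w i k * ip T (fun t => A j t ω) (opK T Ctil (fun s => A k s ω)) := by
      intro j k
      by_cases hj : j = i
      · subst hj; rw [hwdiag j]; ring
      by_cases hk : k = i
      · subst hk; rw [hwdiag k]; ring
      simp only [Function.update_of_ne hj, Function.update_of_ne hk]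
      congr 1
      refine (ip_congr (hAeq' j ω) ?_).symm
      intro t ht
      exact opK_congr Ctil (hAeq' k ω) t
    rw [Finset.sum_congr rfl fun j _ =>
      Finset.sum_congr rfl fun k _ => e3 j k]
    -- term 4
    have e4 : ip T (fun t => b i t ω) (fun t => r * αhat i t ω)
        = r * ip T (fun t => Bb i t ω) (fun t => A i t ω) := by
      rw [ip_mul_right]
      congr 1
      exact (ip_congr (hBeq' i ω) (hAeq' i ω)).symm
    rw [e4]
    -- term 5
    have e5 : ∀ j, w i j * ip T (fun t => bstar t ω)
        (fun t => Function.update αhat i (fun t ω => r * αhat i t ω) j t ω)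
        = w i j * ip T (fun t => bs t ω) (fun t => A j t ω) := by
      intro j
      by_cases hj : j = i
      · subst hj; rw [hwdiag j]; ring
      · simp only [Function.update_of_ne hj]
        congr 1
        exact (ip_congr (hbseq' ω) (hAeq' j ω)).symm
    rw [Finset.sum_congr rfl fun j _ => e5 j]
    simp only [hXdef, hYdef, hZdef]
    ring
  have hJat : ∀ i, Jgraph T P Atil Btil Ctil lam w b bstar c i αhat
      = ∫ ω, (X i ω + Y i ω + Z i ω) ∂P := by
    intro i
    have h1 := hJup i 1
    have h2 : (fun t ω => (1:ℝ) * αhat i t ω) = αhat i := by funext t ω; ring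
    rw [h2, Function.update_eq_self] at h1
    simpa using h1
  -- first order condition
  have hFOC : ∀ i, 2 * (∫ ω, X i ω ∂P) + (∫ ω, Y i ω ∂P) = 0 := by
    intro i
    refine foc_of_max fun r => ?_
    have h1 := hopt i (fun t ω => r * αhat i t ω) (admissible_smul F r (hadm i))
    rw [hJup i r, hJat i] at h1
    have hI1 : Integrable (fun ω => r ^ 2 * X i ω + r * Y i ω) P :=
      ((hXint i).const_mul _).add ((hYint i).const_mul _)
    rw [integral_add hI1 (hZint i),
      integral_add ((hXint i).const_mul _) ((hYint i).const_mul _),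
      integral_const_mul, integral_const_mul] at h1
    have hI2 : Integrable (fun ω => X i ω + Y i ω) P := (hXint i).add (hYint i)
    rw [integral_add hI2 (hZint i), integral_add (hXint i) (hYint i)] at h1
    nlinarith [h1]
  -- summed first order condition
  have hsum0 : ∫ ω, (∑ i, (2 * X i ω + Y i ω)) ∂P = 0 := by
    have hI : ∀ i ∈ Finset.univ, Integrable (fun ω => 2 * X i ω + Y i ω) P :=
      fun i _ => ((hXint i).const_mul 2).add (hYint i)
    rw [integral_finset_sum _ hI]
    refine Finset.sum_eq_zero fun i _ => ?_
    rw [integral_add ((hXint i).const_mul 2) (hYint i), integral_const_mul]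
    linarith [hFOC i]
  -- the coercive quadratic form and the linear pairing
  set G2 : Ω → ℝ := fun ω => ∑ i,
    (lam * ip T (fun t => A i t ω) (fun t => A i t ω)
      + ip T (fun t => A i t ω) (opK T Atil (fun s => A i s ω))
      + (1 / (N:ℝ)) * ∑ j, w i j *
          ip T (fun t => A i t ω) (opK T Btil (fun s => A j s ω))) with hG2def
  set L : Ω → ℝ := fun ω => ∑ i, ip T (fun t => Bb i t ω) (fun t => A i t ω) with hLdef
  have hG2int : Integrable G2 P := by
    refine integrable_finset_sum Finset.univ fun i _ => ?_
    refine Integrable.add (Integrable.add (Integrable.const_mul ?_ _) ?_)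
      (Integrable.const_mul ?_ _)
    · exact integrable_ip_pair (hAjm i) (hAsq i) (hAjm i) (hAsq i)
    · exact integrable_ip_opK hA.1 (hAjm i) (hAsq i) (hAjm i) (hAsq i)
    · refine integrable_finset_sum Finset.univ fun j _ => Integrable.const_mul ?_ _
      exact integrable_ip_opK hBk.1 (hAjm i) (hAsq i) (hAjm j) (hAsq j)
  have hLint : Integrable L P :=
    integrable_finset_sum Finset.univ fun i _ =>
      integrable_ip_pair (hBjm i) (hBsq i) (hAjm i) (hAsq i)
  -- pointwise identity using the adjoint relation and symmetry of w
  have hptw : ∀ᵐ ω ∂P, ∑ i, (2 * X i ω + Y i ω) = L ω - 2 * G2 ω := by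
    filter_upwards [hEV] with ω hev
    have hadj : ∀ i j : Fin N, ip T (fun t => A i t ω) (opKadj T Btil (fun s => A j s ω))
        = ip T (fun t => A j t ω) (opK T Btil (fun s => A i s ω)) := fun i j =>
      ip_opKadj_eq hBk.1 (hAm i ω) (hAm j ω) (hev.1 i) (hev.1 j)
    have hkey : ∑ i, ∑ j, w i j * ip T (fun t => A i t ω)
          (opKadj T Btil (fun s => A j s ω))
        = ∑ i, ∑ j, w i j * ip T (fun t => A i t ω) (opK T Btil (fun s => A j s ω)) := by
      calc ∑ i, ∑ j, w i j * ip T (fun t => A i t ω) (opKadj T Btil (fun s => A j s ω))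
          = ∑ i, ∑ j, w i j * ip T (fun t => A j t ω) (opK T Btil (fun s => A i s ω)) :=
            Finset.sum_congr rfl fun i _ => Finset.sum_congr rfl fun j _ => by rw [hadj i j]
        _ = ∑ j, ∑ i, w i j * ip T (fun t => A j t ω) (opK T Btil (fun s => A i s ω)) :=
            Finset.sum_comm
        _ = ∑ i, ∑ j, w i j * ip T (fun t => A i t ω) (opK T Btil (fun s => A j s ω)) :=
            Finset.sum_congr rfl fun i _ => Finset.sum_congr rfl fun j _ => by
              rw [hwsymm i j]
    -- reduce to atomic sums
    have hXsum : ∑ i, X i ω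
        = -(∑ i, ip T (fun t => A i t ω) (opK T Atil (fun s => A i s ω)))
          - lam * ∑ i, ip T (fun t => A i t ω) (fun t => A i t ω) := by
      have h1 : ∀ i ∈ Finset.univ, X i ω
          = -(ip T (fun t => A i t ω) (opK T Atil (fun s => A i s ω)))
            + (-lam) * ip T (fun t => A i t ω) (fun t => A i t ω) := fun i _ => by
        simp only [hXdef]; ring
      rw [Finset.sum_congr rfl h1, Finset.sum_add_distrib, Finset.sum_neg_distrib,
        ← Finset.mul_sum]
      ring
    have hYsum : ∑ i, Y i ω
        = -((1 / (N:ℝ)) * ((∑ i, ∑ j, w i j * ip T (fun t => A i t ω)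
              (opK T Btil (fun s => A j s ω)))
            + ∑ i, ∑ j, w i j * ip T (fun t => A i t ω)
              (opKadj T Btil (fun s => A j s ω))))
          + ∑ i, ip T (fun t => Bb i t ω) (fun t => A i t ω) := by
      have h1 : ∀ i ∈ Finset.univ, Y i ω
          = (-(1 / (N:ℝ))) * ((∑ j, w i j * ip T (fun t => A i t ω)
                (opK T Btil (fun s => A j s ω)))
              + ∑ j, w i j * ip T (fun t => A i t ω)
                (opKadj T Btil (fun s => A j s ω)))
            + ip T (fun t => Bb i t ω) (fun t => A i t ω) := by
        intro i _
        simp only [hYdef]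
        have h2 : ∑ j, w i j * (ip T (fun t => A i t ω) (opK T Btil (fun s => A j s ω))
              + ip T (fun t => A i t ω) (opKadj T Btil (fun s => A j s ω)))
            = (∑ j, w i j * ip T (fun t => A i t ω) (opK T Btil (fun s => A j s ω)))
              + ∑ j, w i j * ip T (fun t => A i t ω) (opKadj T Btil (fun s => A j s ω)) := by
          rw [← Finset.sum_add_distrib]
          exact Finset.sum_congr rfl fun j _ => by ring
        rw [h2]
        ring
      rw [Finset.sum_congr rfl h1, Finset.sum_add_distrib, ← Finset.mul_sum,
        Finset.sum_add_distrib]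
      ring
    have hGsum : G2 ω
        = lam * (∑ i, ip T (fun t => A i t ω) (fun t => A i t ω))
          + (∑ i, ip T (fun t => A i t ω) (opK T Atil (fun s => A i s ω)))
          + (1 / (N:ℝ)) * ∑ i, ∑ j, w i j * ip T (fun t => A i t ω)
              (opK T Btil (fun s => A j s ω)) := by
      simp only [hG2def]
      rw [Finset.sum_add_distrib, Finset.sum_add_distrib, ← Finset.mul_sum, ← Finset.mul_sum]
    have hLsum : L ω = ∑ i, ip T (fun t => Bb i t ω) (fun t => A i t ω) := rfl
    have hsplit : ∑ i, (2 * X i ω + Y i ω) = 2 * ∑ i, X i ω + ∑ i, Y i ω := by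
      rw [Finset.sum_add_distrib, ← Finset.mul_sum]
    rw [hsplit, hXsum, hYsum, hLsum, hGsum]
    linear_combination (-(1 / (N:ℝ))) * hkey
  have hEL : ∫ ω, L ω ∂P = 2 * ∫ ω, G2 ω ∂P := by
    have h1 : ∫ ω, (∑ i, (2 * X i ω + Y i ω)) ∂P = ∫ ω, (L ω - 2 * G2 ω) ∂P :=
      integral_congr_ae hptw
    rw [hsum0, integral_sub hLint (hG2int.const_mul 2), integral_const_mul] at h1
    linarith
  -- the equilibrium's squared norm and the noise's squared norm
  set S : Ω → ℝ := fun ω => ∑ i, ∫ t in Icc (0:ℝ) T, (A i t ω) ^ 2 with hSdef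
  set Sb : Ω → ℝ := fun ω => ∑ i, ∫ t in Icc (0:ℝ) T, (Bb i t ω) ^ 2 with hSbdef
  have hSint : Integrable S P :=
    integrable_finset_sum Finset.univ fun i _ => sqInt_S_integrable (hAsq i)
  have hSbint : Integrable Sb P :=
    integrable_finset_sum Finset.univ fun i _ => sqInt_S_integrable (hBsq i)
  have hS0 : ∀ ω, 0 ≤ S ω :=
    fun ω => Finset.sum_nonneg fun i _ => integral_nonneg fun t => sq_nonneg _
  have hSb0 : ∀ ω, 0 ≤ Sb ω :=
    fun ω => Finset.sum_nonneg fun i _ => integral_nonneg fun t => sq_nonneg _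
  -- coercivity pathwise
  have hcoe : ∀ᵐ ω ∂P, c₀ * S ω ≤ G2 ω := by
    filter_upwards [hEV] with ω hev
    set f : ℝ → Fin N → ℝ := fun t i => (Icc (0:ℝ) T).indicator (fun s => A i s ω) t
      with hfdef
    have hfeq : ∀ i, EqOn (fun t => f t i) (fun t => A i t ω) (Icc (0:ℝ) T) := by
      intro i t ht
      simp only [hfdef]
      exact indicator_of_mem ht _
    have hfeq' : ∀ (i : Fin N) t, t ∈ Icc (0:ℝ) T → f t i = A i t ω :=
      fun i t ht => hfeq i ht
    have hfm : ∀ i, Measurable fun t => f t i := fun i =>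
      (hAm i ω).indicator measurableSet_Icc
    have hfint : Integrable (fun t => ∑ i, f t i ^ 2) (volume.restrict (Icc (0:ℝ) T)) := by
      refine (integrable_finset_sum Finset.univ fun i _ => hev.1 i).congr ?_
      filter_upwards [ae_restrict_mem measurableSet_Icc] with t ht
      exact (Finset.sum_congr rfl fun i _ => by rw [hfeq' i t ht]).symm
    have hco := hcoerc f ⟨hfm, hfint⟩
    have hLHS : ∫ t in Icc (0:ℝ) T, ∑ i, f t i ^ 2 = S ω := by
      have h1 : ∫ t in Icc (0:ℝ) T, ∑ i, f t i ^ 2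
          = ∫ t in Icc (0:ℝ) T, ∑ i, (A i t ω) ^ 2 :=
        setIntegral_congr_fun measurableSet_Icc fun t ht =>
          Finset.sum_congr rfl fun i _ => by rw [hfeq' i t ht]
      rw [h1, integral_finset_sum _ fun i _ => hev.1 i, hSdef]
    have hrw : ∀ i : Fin N, (fun t => A i t ω * (lam * A i t ω
          + opK T Atil (fun s => A i s ω) t
          + (1 / (N:ℝ)) * ∑ j, w i j * opK T Btil (fun s => A j s ω) t))
        = fun t => (lam * (A i t ω * A i t ω)
          + A i t ω * opK T Atil (fun s => A i s ω) t)
          + A i t ω * ((1 / (N:ℝ)) * ∑ j, w i j * opK T Btil (fun s => A j s ω) t) := by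
      intro i; funext t; ring
    have hint12 : ∀ i : Fin N, Integrable (fun t => lam * (A i t ω * A i t ω)
        + A i t ω * opK T Atil (fun s => A i s ω) t) (volume.restrict (Icc (0:ℝ) T)) :=
      fun i => ((integrable_mul_of_sq (hAm i ω).aestronglyMeasurable
          (hAm i ω).aestronglyMeasurable (hev.1 i) (hev.1 i)).const_mul lam).add
        (integrable_mul_opK hA.1 (hAm i ω) (hAm i ω) (hev.1 i) (hev.1 i))
    have hg3 := fun i : Fin N => integral_mul_sum_opK hBk.1 (hAm i ω) (hev.1 i)
      (fun j => hAm j ω) (fun j => hev.1 j) (w i) (1 / (N:ℝ))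
    have hRHS : ∫ t in Icc (0:ℝ) T, ∑ i, f t i * (lam * f t i
          + opK T Atil (fun s => f s i) t
          + (1 / (N:ℝ)) * ∑ j, w i j * opK T Btil (fun s => f s j) t) = G2 ω := by
      have h1 : ∫ t in Icc (0:ℝ) T, ∑ i, f t i * (lam * f t i
            + opK T Atil (fun s => f s i) t
            + (1 / (N:ℝ)) * ∑ j, w i j * opK T Btil (fun s => f s j) t)
          = ∫ t in Icc (0:ℝ) T, ∑ i, A i t ω * (lam * A i t ω
            + opK T Atil (fun s => A i s ω) t
            + (1 / (N:ℝ)) * ∑ j, w i j * opK T Btil (fun s => A j s ω) t) := by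
        refine setIntegral_congr_fun measurableSet_Icc fun t ht => ?_
        refine Finset.sum_congr rfl fun i _ => ?_
        have hA1 : f t i = A i t ω := hfeq' i t ht
        have hA2 : opK T Atil (fun s => f s i) t = opK T Atil (fun s => A i s ω) t :=
          opK_congr Atil (hfeq i) t
        have hA3 : ∀ j : Fin N, opK T Btil (fun s => f s j) t
            = opK T Btil (fun s => A j s ω) t := fun j => opK_congr Btil (hfeq j) t
        rw [hA1, hA2, Finset.sum_congr rfl fun j _ => by rw [hA3 j]]
      rw [h1]
      have h2 : ∀ i ∈ Finset.univ, Integrable (fun t => A i t ω * (lam * A i t ω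
          + opK T Atil (fun s => A i s ω) t
          + (1 / (N:ℝ)) * ∑ j, w i j * opK T Btil (fun s => A j s ω) t))
          (volume.restrict (Icc (0:ℝ) T)) := by
        intro i _
        rw [hrw i]
        exact (hint12 i).add (hg3 i).1
      rw [integral_finset_sum _ h2, hG2def]
      refine Finset.sum_congr rfl fun i _ => ?_
      rw [hrw i, integral_add (hint12 i) (hg3 i).1,
        integral_add ((integrable_mul_of_sq (hAm i ω).aestronglyMeasurable
          (hAm i ω).aestronglyMeasurable (hev.1 i) (hev.1 i)).const_mul lam)
          (integrable_mul_opK hA.1 (hAm i ω) (hAm i ω) (hev.1 i) (hev.1 i)),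
        integral_const_mul, (hg3 i).2]
      rfl
    rw [hLHS, hRHS] at hco
    exact hco
  -- Cauchy–Schwarz pathwise
  have hLS : ∀ᵐ ω ∂P, L ω ≤ Real.sqrt (Sb ω) * Real.sqrt (S ω) := by
    filter_upwards [hEV] with ω hev
    rw [hLdef, hSdef, hSbdef]
    have h1 : ∀ i : Fin N, ip T (fun t => Bb i t ω) (fun t => A i t ω)
        ≤ Real.sqrt (∫ t in Icc (0:ℝ) T, (Bb i t ω) ^ 2)
          * Real.sqrt (∫ t in Icc (0:ℝ) T, (A i t ω) ^ 2) := by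
      intro i
      have h2 := sq_integral_mul_le (hBm i ω).aestronglyMeasurable
        (hAm i ω).aestronglyMeasurable (hev.2.1 i) (hev.1 i)
      calc ip T (fun t => Bb i t ω) (fun t => A i t ω)
          ≤ |ip T (fun t => Bb i t ω) (fun t => A i t ω)| := le_abs_self _
        _ = Real.sqrt ((ip T (fun t => Bb i t ω) (fun t => A i t ω)) ^ 2) :=
            (Real.sqrt_sq_eq_abs _).symm
        _ ≤ Real.sqrt ((∫ t in Icc (0:ℝ) T, (Bb i t ω) ^ 2)
              * ∫ t in Icc (0:ℝ) T, (A i t ω) ^ 2) := Real.sqrt_le_sqrt h2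
        _ = _ := Real.sqrt_mul (integral_nonneg fun t => sq_nonneg _) _
    calc ∑ i, ip T (fun t => Bb i t ω) (fun t => A i t ω)
        ≤ ∑ i, Real.sqrt (∫ t in Icc (0:ℝ) T, (Bb i t ω) ^ 2)
            * Real.sqrt (∫ t in Icc (0:ℝ) T, (A i t ω) ^ 2) :=
          Finset.sum_le_sum fun i _ => h1 i
      _ ≤ _ := sum_sqrt_mul_sqrt_le _ _
          (fun i => integral_nonneg fun t => sq_nonneg _)
          (fun i => integral_nonneg fun t => sq_nonneg _)
  -- putting the chain together
  have hsqint : Integrable (fun ω => Real.sqrt (Sb ω) * Real.sqrt (S ω)) P := by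
    refine Integrable.mono' ((hSbint.add hSint).div_const 2)
      ((Real.continuous_sqrt.comp_aestronglyMeasurable hSbint.1).mul
        (Real.continuous_sqrt.comp_aestronglyMeasurable hSint.1)) ?_
    filter_upwards with ω
    rw [Real.norm_eq_abs, abs_of_nonneg (mul_nonneg (Real.sqrt_nonneg _) (Real.sqrt_nonneg _))]
    simp only [Pi.add_apply]
    nlinarith [Real.sq_sqrt (hSb0 ω), Real.sq_sqrt (hS0 ω), Real.sqrt_nonneg (Sb ω),
      Real.sqrt_nonneg (S ω), sq_nonneg (Real.sqrt (Sb ω) - Real.sqrt (S ω))]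
  have hchain : 2 * c₀ * ∫ ω, S ω ∂P ≤ Real.sqrt (∫ ω, Sb ω ∂P) * Real.sqrt (∫ ω, S ω ∂P) := by
    have h1 : c₀ * ∫ ω, S ω ∂P ≤ ∫ ω, G2 ω ∂P := by
      rw [← integral_const_mul]
      exact integral_mono_ae (hSint.const_mul c₀) hG2int hcoe
    have h2 : ∫ ω, L ω ∂P ≤ ∫ ω, Real.sqrt (Sb ω) * Real.sqrt (S ω) ∂P :=
      integral_mono_ae hLint hsqint hLS
    have h3 := integral_sqrt_mul_sqrt_le hSbint hSint hSb0 hS0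
    linarith [hEL]
  -- identify the integrals with those in the statement
  have hgoalS : ∫ ω, (∫ t in Icc (0:ℝ) T, ∑ i, (αhat i t ω) ^ 2) ∂P = ∫ ω, S ω ∂P := by
    refine integral_congr_ae ?_
    filter_upwards [hEV] with ω hev
    rw [hSdef]
    have h1 : ∫ t in Icc (0:ℝ) T, ∑ i, (αhat i t ω) ^ 2
        = ∫ t in Icc (0:ℝ) T, ∑ i, (A i t ω) ^ 2 := by
      refine setIntegral_congr_fun measurableSet_Icc fun t ht => ?_
      exact Finset.sum_congr rfl fun i _ => by rw [hAeq i ω t ht.2]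
    rw [h1, integral_finset_sum _ fun i _ => hev.1 i]
  have hgoalB : ∫ ω, (∫ t in Icc (0:ℝ) T, ∑ i, (b i t ω) ^ 2) ∂P = ∫ ω, Sb ω ∂P := by
    refine integral_congr_ae ?_
    filter_upwards [hEV] with ω hev
    rw [hSbdef]
    have h1 : ∫ t in Icc (0:ℝ) T, ∑ i, (b i t ω) ^ 2
        = ∫ t in Icc (0:ℝ) T, ∑ i, (Bb i t ω) ^ 2 := by
      refine setIntegral_congr_fun measurableSet_Icc fun t ht => ?_
      exact Finset.sum_congr rfl fun i _ => by rw [hBeq i ω t ht.2]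
    rw [h1, integral_finset_sum _ fun i _ => hev.2.1 i]
  rw [hgoalS, hgoalB]
  have hSnn : 0 ≤ ∫ ω, S ω ∂P := integral_nonneg hS0
  have hSbnn : 0 ≤ ∫ ω, Sb ω ∂P := integral_nonneg hSb0
  rcases eq_or_lt_of_le hSnn with h0 | h0
  · rw [← h0]; simpa using hSbnn
  · have hsq1 := Real.sq_sqrt hSnn
    have hsq2 := Real.sq_sqrt hSbnn
    nlinarith [Real.sqrt_nonneg (∫ ω, S ω ∂P), Real.sqrt_nonneg (∫ ω, Sb ω ∂P),
      mul_le_mul_of_nonneg_right hchain (le_of_lt h0), hchain,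
      mul_pos hc₀ h0]
end
end
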